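/- arXiv:2005.12538 — 7 statements merged into one kernel-verified Lean document; each statement's English description precedes it below -/
import Mathlib

section
/- Let p₁, p₂, q₁, q₂ be continuous real-valued functions on [a,b] with p₁(t) ≥ p₂(t) > 0 and q₁(t) ≤ q₂(t) for all t. Let φ₁ be a nontrivial solution of (p₁φ')' + q₁φ = 0 with consecutive zeros t₁ < t₂ in [a,b]. Then every nontrivial solution φ₂ of (p₂φ')' + q₂φ = 0 has at least one zero in the closed interval [t₁, t₂]. -/
/-!
Picone's argument. If `φ₂` had no zero on `[t₁, t₂]`, the function
`z = p₁ φ₁' φ₁ - p₂ φ₂' φ₁² / φ₂` would be defined there, vanish at both ends, and have derivative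
`(q₂ - q₁) φ₁² + (p₁ - p₂) φ₁'² + p₂ (φ₁' - φ₂' φ₁ / φ₂)² ≥ 0`. So `z` is constant, this derivative
vanishes inside, which forces the Wronskian `φ₁' φ₂ - φ₁ φ₂'` to vanish there. Then `φ₁ / φ₂` is
constant, hence `0` since `φ₁ t₁ = 0`, contradicting that `φ₁` has no zero in `(t₁, t₂)`.
-/

open Set Topology

noncomputable def piconeDefect (p₁ p₂ q₁ q₂ x x' y y' : ℝ) : ℝ :=
  (q₂ - q₁) * x ^ 2 + (p₁ - p₂) * x' ^ 2 + p₂ * (x' - y' * x / y) ^ 2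

section piconeDefect

variable {p₁ p₂ q₁ q₂ x x' y y' : ℝ}

theorem piconeDefect_nonneg (hp : p₂ ≤ p₁) (hp₂ : 0 ≤ p₂) (hq : q₁ ≤ q₂) :
    0 ≤ piconeDefect p₁ p₂ q₁ q₂ x x' y y' := by
  unfold piconeDefect
  have := mul_nonneg (sub_nonneg.2 hq) (sq_nonneg x)
  have := mul_nonneg (sub_nonneg.2 hp) (sq_nonneg x')
  have := mul_nonneg hp₂ (sq_nonneg (x' - y' * x / y))
  linarith

theorem wronskian_eq_zero_of_piconeDefect_eq_zero (hp : p₂ ≤ p₁) (hp₂ : 0 < p₂) (hq : q₁ ≤ q₂)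
    (hy : y ≠ 0) (h : piconeDefect p₁ p₂ q₁ q₂ x x' y y' = 0) : x' * y - x * y' = 0 := by
  unfold piconeDefect at h
  have := mul_nonneg (sub_nonneg.2 hq) (sq_nonneg x)
  have := mul_nonneg (sub_nonneg.2 hp) (sq_nonneg x')
  have := mul_nonneg hp₂.le (sq_nonneg (x' - y' * x / y))
  have hsq : (x' - y' * x / y) ^ 2 = 0 := by
    exact (mul_eq_zero.1 (by linarith : p₂ * (x' - y' * x / y) ^ 2 = 0)).resolve_left hp₂.ne'
  have hdiff := pow_eq_zero_iff two_ne_zero |>.1 hsq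
  field_simp at hdiff
  linarith

end piconeDefect

theorem hasDerivAt_picone {p₁ p₂ q₁ q₂ φ₁ φ₁' φ₂ φ₂' : ℝ → ℝ} {t : ℝ}
    (hφ₁ : HasDerivAt φ₁ (φ₁' t) t) (hp₁φ₁ : HasDerivAt (fun s => p₁ s * φ₁' s) (-(q₁ t * φ₁ t)) t)
    (hφ₂ : HasDerivAt φ₂ (φ₂' t) t) (hp₂φ₂ : HasDerivAt (fun s => p₂ s * φ₂' s) (-(q₂ t * φ₂ t)) t)
    (hφ₂t : φ₂ t ≠ 0) :
    HasDerivAt (fun s => p₁ s * φ₁' s * φ₁ s - p₂ s * φ₂' s * (φ₁ s ^ 2 / φ₂ s))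
      (piconeDefect (p₁ t) (p₂ t) (q₁ t) (q₂ t) (φ₁ t) (φ₁' t) (φ₂ t) (φ₂' t)) t := by
  have hsq : HasDerivAt (fun s => φ₁ s ^ 2) (2 * φ₁ t * φ₁' t) t := by
    simpa using hφ₁.fun_pow 2
  refine ((hp₁φ₁.mul hφ₁).sub (hp₂φ₂.mul (hsq.div hφ₂ hφ₂t))).congr_deriv ?_
  rw [piconeDefect, Pi.div_apply]
  field_simp
  ring

theorem eq_zero_of_hasDerivAt_nonneg_of_eq {f f' : ℝ → ℝ} {a b : ℝ}
    (hf : ∀ x ∈ Icc a b, HasDerivAt f (f' x) x) (hf' : ∀ x ∈ Ioo a b, 0 ≤ f' x)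
    (hfab : f a = f b) : ∀ x ∈ Ioo a b, f' x = 0 := by
  intro x hx
  have hmono : MonotoneOn f (Icc a b) := by
    refine monotoneOn_of_hasDerivWithinAt_nonneg (f' := f') (convex_Icc a b)
      (fun y hy => (hf y hy).continuousAt.continuousWithinAt) (fun y hy => ?_) (fun y hy => ?_)
    · rw [interior_Icc] at hy ⊢
      exact (hf y (Ioo_subset_Icc_self hy)).hasDerivWithinAt
    · exact hf' y (by rwa [interior_Icc] at hy)
  have hab : a ≤ b := hx.1.le.trans hx.2.le
  have hconst : ∀ y ∈ Icc a b, f y = f a := fun y hy =>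
    le_antisymm (hfab ▸ hmono hy (right_mem_Icc.2 hab) hy.2) (hmono (left_mem_Icc.2 hab) hy hy.1)
  have hloc : f =ᶠ[𝓝 x] fun _ => f a := by
    filter_upwards [Ioo_mem_nhds hx.1 hx.2] with y hy
    exact hconst y (Ioo_subset_Icc_self hy)
  exact (hf x (Ioo_subset_Icc_self hx)).unique ((hasDerivAt_const x (f a)).congr_of_eventuallyEq hloc)

theorem eq_zero_of_wronskian_eq_zero {u u' v v' : ℝ → ℝ} {a b : ℝ} (hab : a < b)
    (hu : ∀ t ∈ Icc a b, HasDerivAt u (u' t) t) (hv : ∀ t ∈ Icc a b, HasDerivAt v (v' t) t)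
    (hv₀ : ∀ t ∈ Icc a b, v t ≠ 0) (hW : ∀ t ∈ Ioo a b, u' t * v t - u t * v' t = 0)
    (hua : u a = 0) : u b = 0 := by
  have hratio : ∀ t ∈ Icc a b, HasDerivAt (fun s => u s / v s)
      ((u' t * v t - u t * v' t) / v t ^ 2) t :=
    fun t ht => (hu t ht).div (hv t ht) (hv₀ t ht)
  obtain ⟨c, hc, hslope⟩ := exists_hasDerivAt_eq_slope (fun s => u s / v s) _ hab
    (fun t ht => (hratio t ht).continuousAt.continuousWithinAt)
    (fun t ht => hratio t (Ioo_subset_Icc_self ht))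
  have hconst : u b / v b = u a / v a := by
    rw [hW c hc, zero_div, eq_comm, div_eq_zero_iff, sub_eq_zero] at hslope
    exact hslope.resolve_right (sub_ne_zero.2 hab.ne')
  rwa [hua, zero_div, div_eq_zero_iff, or_iff_left (hv₀ b (right_mem_Icc.2 hab.le))] at hconst

theorem sturm_comparison_general
    (a b : ℝ)
    (p₁ p₂ q₁ q₂ : ℝ → ℝ)
    (hpq : ∀ t ∈ Icc a b, p₁ t ≥ p₂ t ∧ p₂ t > 0 ∧ q₁ t ≤ q₂ t)
    (φ₁ φ₁' φ₂ φ₂' : ℝ → ℝ)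
    (hφ₁d : ∀ t ∈ Icc a b, HasDerivAt φ₁ (φ₁' t) t)
    (hφ₁eq : ∀ t ∈ Icc a b, HasDerivAt (fun s => p₁ s * φ₁' s) (-(q₁ t * φ₁ t)) t)
    (hφ₂d : ∀ t ∈ Icc a b, HasDerivAt φ₂ (φ₂' t) t)
    (hφ₂eq : ∀ t ∈ Icc a b, HasDerivAt (fun s => p₂ s * φ₂' s) (-(q₂ t * φ₂ t)) t)
    (t₁ t₂ : ℝ) (ht₁ : t₁ ∈ Icc a b) (ht₂ : t₂ ∈ Icc a b) (h₁₂ : t₁ < t₂)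
    (hz₁ : φ₁ t₁ = 0) (hz₂ : φ₁ t₂ = 0)
    (hconsec : ∀ t ∈ Ioo t₁ t₂, φ₁ t ≠ 0) :
    ∃ s ∈ Icc t₁ t₂, φ₂ s = 0 := by
  by_contra! hφ₂₀
  have hsub : Icc t₁ t₂ ⊆ Icc a b := Icc_subset_Icc ht₁.1 ht₂.2
  have hpicone : ∀ t ∈ Icc t₁ t₂, HasDerivAt _ _ t := fun t ht =>
    hasDerivAt_picone (hφ₁d t (hsub ht)) (hφ₁eq t (hsub ht)) (hφ₂d t (hsub ht))
      (hφ₂eq t (hsub ht)) (hφ₂₀ t ht)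
  have hdefect := eq_zero_of_hasDerivAt_nonneg_of_eq hpicone
    (fun t ht => let ⟨hp, hp₂, hq⟩ := hpq t (hsub (Ioo_subset_Icc_self ht))
      piconeDefect_nonneg hp hp₂.le hq)
    (by simp [hz₁, hz₂])
  have hW : ∀ t ∈ Ioo t₁ t₂, φ₁' t * φ₂ t - φ₁ t * φ₂' t = 0 := fun t ht =>
    let ⟨hp, hp₂, hq⟩ := hpq t (hsub (Ioo_subset_Icc_self ht))
    wronskian_eq_zero_of_piconeDefect_eq_zero hp hp₂ hq (hφ₂₀ t (Ioo_subset_Icc_self ht))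
      (hdefect t ht)
  obtain ⟨m, hm⟩ := nonempty_Ioo.2 h₁₂
  have hsub' : Icc t₁ m ⊆ Icc t₁ t₂ := Icc_subset_Icc_right hm.2.le
  exact hconsec m hm (eq_zero_of_wronskian_eq_zero hm.1 (fun t ht => hφ₁d t (hsub (hsub' ht)))
    (fun t ht => hφ₂d t (hsub (hsub' ht))) (fun t ht => hφ₂₀ t (hsub' ht))
    (fun t ht => hW t (Ioo_subset_Ioo_right hm.2.le ht)) hz₁)

/-- Sturm comparison theorem: if `p₁ ≥ p₂ > 0` and `q₁ ≤ q₂` on `[a,b]`, and a nontrivial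
solution `φ₁` of `(p₁ φ')' + q₁ φ = 0` has consecutive zeros `t₁ < t₂` in `[a,b]`, then
every nontrivial solution `φ₂` of `(p₂ φ')' + q₂ φ = 0` has a zero in `[t₁, t₂]`. -/
theorem sturm_comparison
    (a b : ℝ) (hab : a < b)
    (p₁ p₂ q₁ q₂ : ℝ → ℝ)
    (hp₁ : ContinuousOn p₁ (Icc a b)) (hp₂ : ContinuousOn p₂ (Icc a b))
    (hq₁ : ContinuousOn q₁ (Icc a b)) (hq₂ : ContinuousOn q₂ (Icc a b))
    (hpq : ∀ t ∈ Icc a b, p₁ t ≥ p₂ t ∧ p₂ t > 0 ∧ q₁ t ≤ q₂ t)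
    (φ₁ φ₁' φ₂ φ₂' : ℝ → ℝ)
    (hφ₁d : ∀ t ∈ Icc a b, HasDerivAt φ₁ (φ₁' t) t)
    (hφ₁eq : ∀ t ∈ Icc a b, HasDerivAt (fun s => p₁ s * φ₁' s) (-(q₁ t * φ₁ t)) t)
    (hφ₁nt : ∃ t ∈ Icc a b, φ₁ t ≠ 0 ∨ φ₁' t ≠ 0)
    (hφ₂d : ∀ t ∈ Icc a b, HasDerivAt φ₂ (φ₂' t) t)
    (hφ₂eq : ∀ t ∈ Icc a b, HasDerivAt (fun s => p₂ s * φ₂' s) (-(q₂ t * φ₂ t)) t)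
    (hφ₂nt : ∃ t ∈ Icc a b, φ₂ t ≠ 0 ∨ φ₂' t ≠ 0)
    (t₁ t₂ : ℝ) (ht₁ : t₁ ∈ Icc a b) (ht₂ : t₂ ∈ Icc a b) (h₁₂ : t₁ < t₂)
    (hz₁ : φ₁ t₁ = 0) (hz₂ : φ₁ t₂ = 0)
    (hconsec : ∀ t ∈ Ioo t₁ t₂, φ₁ t ≠ 0) :
    ∃ s ∈ Icc t₁ t₂, φ₂ s = 0 :=
  sturm_comparison_general a b p₁ p₂ q₁ q₂ hpq φ₁ φ₁' φ₂ φ₂' hφ₁d hφ₁eq hφ₂d hφ₂eq t₁ t₂ ht₁ ht₂ h₁₂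
    hz₁ hz₂ hconsec
end

section
/- Let f₁, g₁ be continuous on [t₀, τ₀) with f₁(t) ≥ 0. If y is a solution of the Riccati equation y' + f₁(t)y² + g₁(t) = 0 whose maximal interval of existence inside (t₀, τ₀) is (t₁, t₂) with t₀ < t₁ < t₂ < τ₀, then y(t) → -∞ as t → t₂⁻ and y(t) → +∞ as t → t₁⁺. -/
/-!
Near `t₂` we have `y' = -(f y² + g) ≤ -g ≤ M`, since `f ≥ 0` and `g` is continuous at `t₂`. Hence
`y t - M t` is antitone on a left neighbourhood of `t₂`, so `y` either tends to `-∞` or has a finite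
limit `L` at `t₂⁻`. In the second case a Picard–Lindelöf solution through `(t₂, L)`, glued to `y`,
extends `y` beyond `t₂`, contradicting maximality. The left endpoint reduces to the right one,
because `t ↦ -y (-t)` solves the Riccati equation with coefficients `f (-t)` and `g (-t)`.
-/

open Set Filter Topology Metric
open scoped NNReal

theorem AntitoneOn.tendsto_nhdsLT_atBot_or_exists {w : ℝ → ℝ} {a b : ℝ} (hab : a < b)
    (hw : AntitoneOn w (Ioo a b)) :
    Tendsto w (𝓝[<] b) atBot ∨ ∃ L, Tendsto w (𝓝[<] b) (𝓝 L) := by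
  by_cases hbdd : BddBelow (w '' Ioo a b)
  · exact .inr ⟨_, hw.tendsto_nhdsWithin_Ioo_left (nonempty_Ioo.2 hab) hbdd⟩
  · refine .inl (tendsto_atBot.2 fun c => ?_)
    obtain ⟨_, ⟨s, hs, rfl⟩, hsc⟩ := not_bddBelow_iff.1 hbdd c
    filter_upwards [Ioo_mem_nhdsLT hs.2] with r hr
    exact (hw hs ⟨hs.1.trans hr.1, hr.2⟩ hr.1.le).trans hsc.le

theorem tendsto_nhdsLT_atBot_or_exists_of_hasDerivAt_le {y y' : ℝ → ℝ} {a b M : ℝ} (hab : a < b)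
    (hy : ∀ t ∈ Ioo a b, HasDerivAt y (y' t) t) (hM : ∀ t ∈ Ioo a b, y' t ≤ M) :
    Tendsto y (𝓝[<] b) atBot ∨ ∃ L, Tendsto y (𝓝[<] b) (𝓝 L) := by
  have hw : ∀ t ∈ Ioo a b, HasDerivAt (fun t => y t - M * t) (y' t - M) t := fun t ht =>
    ((hy t ht).sub ((hasDerivAt_id t).const_mul M)).congr_deriv (by rw [mul_one])
  have hanti : AntitoneOn (fun t => y t - M * t) (Ioo a b) := by
    refine antitoneOn_of_hasDerivWithinAt_nonpos (f' := fun t => y' t - M) (convex_Ioo a b)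
      (fun t ht => (hw t ht).continuousAt.continuousWithinAt) (fun t ht => ?_) (fun t ht => ?_)
    · rw [interior_Ioo] at ht
      exact (hw t ht).hasDerivWithinAt
    · rw [interior_Ioo] at ht
      exact sub_nonpos.2 (hM t ht)
  have hMt : Tendsto (fun t => M * t) (𝓝[<] b) (𝓝 (M * b)) :=
    ((continuous_const_mul M).tendsto b).mono_left nhdsWithin_le_nhds
  refine (hanti.tendsto_nhdsLT_atBot_or_exists hab).imp (fun h => ?_) fun ⟨L, h⟩ => ⟨L + M * b, ?_⟩
  · simpa using h.atBot_add hMt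
  · simpa using h.add hMt

section

variable {E : Type*} [NormedAddCommGroup E] [NormedSpace ℝ E]

theorem exists_extension_of_tendsto_nhdsLT {F : ℝ → E → E} {y sol : ℝ → E} {a b ε : ℝ} {L : E}
    (hy : ∀ t ∈ Ioo a b, HasDerivAt y (F t (y t)) t) (hlim : Tendsto y (𝓝[<] b) (𝓝 L))
    (hF : ContinuousAt (Function.uncurry F) (b, L))
    (hsol : ∀ t ∈ Ioo (b - ε) (b + ε), HasDerivAt sol (F t (sol t)) t) (hsolb : sol b = L) :
    ∃ z : ℝ → E, EqOn z y (Ioo a b) ∧ ∀ t ∈ Ioo a (b + ε), HasDerivAt z (F t (z t)) t := by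
  obtain ⟨z, hzy, hzsol⟩ : ∃ z : ℝ → E, EqOn z y (Iio b) ∧ EqOn z sol (Ici b) :=
    ⟨fun t => if t < b then y t else sol t, fun t ht => if_pos ht, fun t ht => if_neg (not_lt.2 ht)⟩
  have hz_left : ∀ t ∈ Ioo a b, HasDerivAt z (F t (z t)) t := fun t ht => by
    rw [hzy ht.2]
    exact (hy t ht).congr_of_eventuallyEq (eventuallyEq_of_mem (Iio_mem_nhds ht.2) hzy)
  have hzb : z b = L := (hzsol (mem_Ici.2 le_rfl)).trans hsolb
  refine ⟨z, fun t ht => hzy ht.2, fun t ⟨hat, htε⟩ => ?_⟩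
  rcases lt_trichotomy t b with htb | rfl | htb
  · exact hz_left t ⟨hat, htb⟩
  · have hzlim : Tendsto z (𝓝[<] t) (𝓝 L) :=
      hlim.congr' (eventuallyEq_of_mem self_mem_nhdsWithin fun s hs => (hzy hs).symm)
    have hleft : HasDerivWithinAt z (F t L) (Iic t) t := by
      refine hasDerivWithinAt_Iic_of_tendsto_deriv
        (fun s hs => (hz_left s hs).differentiableAt.differentiableWithinAt)
        ?_ (Ioo_mem_nhdsLT hat) ?_
      · rw [ContinuousWithinAt, hzb]
        exact hzlim.mono_left (nhdsWithin_mono _ Ioo_subset_Iio_self)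
      · have hFlim : Tendsto (fun s => F s (z s)) (𝓝[<] t) (𝓝 (F t L)) :=
          hF.tendsto.comp ((tendsto_id.mono_left nhdsWithin_le_nhds).prodMk_nhds hzlim)
        refine hFlim.congr' (eventuallyEq_of_mem (Ioo_mem_nhdsLT hat) fun s hs => ?_)
        exact (hz_left s hs).deriv.symm
    have hright : HasDerivWithinAt z (F t L) (Ici t) t := by
      rw [← hsolb]
      exact ((hsol t ⟨by linarith, by linarith⟩).hasDerivWithinAt).congr hzsol
        (hzsol (mem_Ici.2 le_rfl))
    rw [hzb]
    simpa using hleft.union hright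
  · rw [hzsol htb.le]
    exact (hsol t ⟨by linarith, htε⟩).congr_of_eventuallyEq
      (eventuallyEq_of_mem (Ioi_mem_nhds htb) fun s hs => hzsol (Ioi_subset_Ici_self hs))

theorem exists_forall_mem_Ioo_hasDerivAt_of_lipschitzOnWith [CompleteSpace E] {F : ℝ → E → E}
    {c δ : ℝ} {x₀ : E} {a L K : ℝ≥0} (hδ : 0 < δ) (ha : 0 < a)
    (hlip : ∀ t ∈ Icc (c - δ) (c + δ), LipschitzOnWith K (F t) (closedBall x₀ a))
    (hcont : ∀ x ∈ closedBall x₀ a, ContinuousOn (F · x) (Icc (c - δ) (c + δ)))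
    (hbound : ∀ t ∈ Icc (c - δ) (c + δ), ∀ x ∈ closedBall x₀ a, ‖F t x‖ ≤ L) :
    ∃ ε > 0, ∃ α : ℝ → E, α c = x₀ ∧ ∀ t ∈ Ioo (c - ε) (c + ε), HasDerivAt α (F t (α t)) t := by
  -- `ε ≤ a / (L + 1)` keeps a solution with speed at most `L` inside `closedBall x₀ a`.
  set ε := min δ (a / (L + 1))
  have hε : 0 < ε := lt_min hδ (by positivity)
  have hsub : Icc (c - ε) (c + ε) ⊆ Icc (c - δ) (c + δ) :=
    Icc_subset_Icc (by linarith [min_le_left δ (a / (L + 1))])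
      (by linarith [min_le_left δ (a / (L + 1))])
  have hpl : IsPicardLindelof F (tmin := c - ε) (tmax := c + ε)
      ⟨c, by linarith, by linarith⟩ x₀ a 0 L K := by
    refine ⟨fun t ht => hlip t (hsub ht), fun x hx => (hcont x hx).mono hsub,
      fun t ht => hbound t (hsub ht), ?_⟩
    calc (L : ℝ) * max (c + ε - c) (c - (c - ε))
        = L * ε := by rw [add_sub_cancel_left, sub_sub_cancel, max_self]
      _ ≤ L * (a / (L + 1)) := by gcongr; exact min_le_right _ _
      _ ≤ a - (0 : ℝ≥0) := by
        rw [NNReal.coe_zero, sub_zero, mul_div_assoc']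
        exact div_le_of_le_mul₀ (by positivity) a.2 (by nlinarith [a.2])
  obtain ⟨α, hα₀, hα⟩ := hpl.exists_eq_forall_mem_Icc_hasDerivWithinAt₀
  exact ⟨ε, hε, α, hα₀, fun t ht =>
    (hα t (Ioo_subset_Icc_self ht)).hasDerivAt (Icc_mem_nhds ht.1 ht.2)⟩

end

def riccatiField (f g : ℝ → ℝ) (t x : ℝ) : ℝ := -(f t * x ^ 2 + g t)

theorem continuousAt_uncurry_riccatiField {f g : ℝ → ℝ} {t : ℝ} (hf : ContinuousAt f t)
    (hg : ContinuousAt g t) (x : ℝ) :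
    ContinuousAt (Function.uncurry (riccatiField f g)) (t, x) :=
  ((hf.comp continuousAt_fst).mul (continuousAt_snd.pow 2) |>.add (hg.comp continuousAt_fst)).neg

theorem abs_riccatiField_le {f g : ℝ → ℝ} {t x C D R : ℝ} (hf : |f t| ≤ C) (hg : |g t| ≤ D)
    (hx : |x| ≤ R) : |riccatiField f g t x| ≤ C * R ^ 2 + D := by
  have hx2 : x ^ 2 ≤ R ^ 2 := by
    rw [← sq_abs]
    exact pow_le_pow_left₀ (abs_nonneg x) hx 2
  calc |riccatiField f g t x| ≤ |f t| * x ^ 2 + |g t| := by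
        rw [riccatiField, abs_neg]
        refine (abs_add_le _ _).trans_eq ?_
        rw [abs_mul, abs_of_nonneg (sq_nonneg x)]
    _ ≤ C * R ^ 2 + D := by
        gcongr
        exact (abs_nonneg _).trans hf

theorem lipschitzOnWith_riccatiField {f g : ℝ → ℝ} {t C R : ℝ} {s : Set ℝ} (hf : |f t| ≤ C)
    (hs : ∀ x ∈ s, |x| ≤ R) : LipschitzOnWith (C * (2 * R)).toNNReal (riccatiField f g t) s := by
  refine LipschitzOnWith.of_dist_le_mul fun x hx x' hx' => ?_
  have hfR : |f t| * |x + x'| ≤ C * (2 * R) :=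
    mul_le_mul hf (by linarith [abs_add_le x x', hs x hx, hs x' hx']) (abs_nonneg _)
      ((abs_nonneg _).trans hf)
  calc dist (riccatiField f g t x) (riccatiField f g t x') = |f t| * |x + x'| * dist x x' := by
        rw [Real.dist_eq, Real.dist_eq, abs_sub_comm x x', ← abs_mul, ← abs_mul, riccatiField,
          riccatiField]
        congr 1
        ring
    _ ≤ (C * (2 * R)).toNNReal * dist x x' := by
        gcongr
        exact hfR.trans (Real.le_coe_toNNReal _)

theorem exists_hasDerivAt_riccatiField {f g : ℝ → ℝ} {s : Set ℝ} {c : ℝ} (hs : s ∈ 𝓝 c)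
    (hf : ContinuousOn f s) (hg : ContinuousOn g s) (x₀ : ℝ) :
    ∃ ε > 0, ∃ α : ℝ → ℝ, α c = x₀ ∧
      ∀ t ∈ Ioo (c - ε) (c + ε), HasDerivAt α (riccatiField f g t (α t)) t := by
  obtain ⟨δ, hδ, hδs⟩ := nhds_basis_closedBall.mem_iff.1 hs
  rw [Real.closedBall_eq_Icc] at hδs
  obtain ⟨C, hC⟩ := isCompact_Icc.exists_bound_of_continuousOn (hf.mono hδs)
  obtain ⟨D, hD⟩ := isCompact_Icc.exists_bound_of_continuousOn (hg.mono hδs)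
  have hR : ∀ x ∈ closedBall x₀ (1 : ℝ≥0), |x| ≤ |x₀| + 1 := fun x hx => by
    rw [NNReal.coe_one, mem_closedBall, Real.dist_eq] at hx
    linarith [abs_sub_abs_le_abs_sub x x₀]
  refine exists_forall_mem_Ioo_hasDerivAt_of_lipschitzOnWith
    (L := (C * (|x₀| + 1) ^ 2 + D).toNNReal) hδ one_pos
    (fun t ht => lipschitzOnWith_riccatiField (hC t ht) hR)
    (fun x _ => ((hf.mono hδs).mul continuousOn_const |>.add (hg.mono hδs)).neg)
    (fun t ht x hx => ?_)
  exact (abs_riccatiField_le (hC t ht) (hD t ht) (hR x hx)).trans (Real.le_coe_toNNReal _)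

theorem tendsto_atBot_of_riccati_not_extendable_right {f g y : ℝ → ℝ} {s : Set ℝ} {t₁ t₂ : ℝ}
    (hs : s ∈ 𝓝 t₂) (hf : ContinuousOn f s) (hg : ContinuousOn g s)
    (hf0 : ∀ t ∈ Ioo t₁ t₂, 0 ≤ f t) (h12 : t₁ < t₂)
    (hy : ∀ t ∈ Ioo t₁ t₂, HasDerivAt y (riccatiField f g t (y t)) t)
    (hmax : ∀ ε > 0, ¬∃ z : ℝ → ℝ, EqOn z y (Ioo t₁ t₂) ∧
      ∀ t ∈ Ioo t₁ (t₂ + ε), HasDerivAt z (riccatiField f g t (z t)) t) :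
    Tendsto y (𝓝[<] t₂) atBot := by
  have hg_lower : ∀ᶠ t in 𝓝[<] t₂, g t₂ - 1 < g t ∧ t ∈ Ioo t₁ t₂ :=
    (((hg.continuousAt hs).eventually (lt_mem_nhds (sub_one_lt _))).filter_mono
      nhdsWithin_le_nhds).and (Ioo_mem_nhdsLT h12)
  obtain ⟨a, hat₂, ha⟩ := mem_nhdsLT_iff_exists_Ioo_subset.1 hg_lower
  have hderiv_le : ∀ t ∈ Ioo a t₂, riccatiField f g t (y t) ≤ 1 - g t₂ := fun t ht => by
    obtain ⟨hgt, ht'⟩ := ha ht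
    have := mul_nonneg (hf0 t ht') (sq_nonneg (y t))
    rw [riccatiField]
    linarith
  rcases tendsto_nhdsLT_atBot_or_exists_of_hasDerivAt_le hat₂ (fun t ht => hy t (ha ht).2)
    hderiv_le with h | ⟨L, hL⟩
  · exact h
  obtain ⟨ε, hε, sol, hsol₀, hsol⟩ := exists_hasDerivAt_riccatiField hs hf hg L
  exact absurd (exists_extension_of_tendsto_nhdsLT hy hL
    (continuousAt_uncurry_riccatiField (hf.continuousAt hs) (hg.continuousAt hs) L) hsol hsol₀)
    (hmax ε hε)

theorem hasDerivAt_riccatiField_neg_comp_neg {f g y : ℝ → ℝ} {t : ℝ}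
    (h : HasDerivAt y (riccatiField f g (-t) (y (-t))) (-t)) :
    HasDerivAt (fun s => -y (-s))
      (riccatiField (fun s => f (-s)) (fun s => g (-s)) t (-y (-t))) t := by
  refine (h.comp t (hasDerivAt_neg t)).neg.congr_deriv ?_
  simp only [riccatiField]
  ring

theorem tendsto_atTop_of_riccati_not_extendable_left {f g y : ℝ → ℝ} {s : Set ℝ} {t₁ t₂ : ℝ}
    (hs : s ∈ 𝓝 t₁) (hf : ContinuousOn f s) (hg : ContinuousOn g s)
    (hf0 : ∀ t ∈ Ioo t₁ t₂, 0 ≤ f t) (h12 : t₁ < t₂)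
    (hy : ∀ t ∈ Ioo t₁ t₂, HasDerivAt y (riccatiField f g t (y t)) t)
    (hmax : ∀ ε > 0, ¬∃ z : ℝ → ℝ, EqOn z y (Ioo t₁ t₂) ∧
      ∀ t ∈ Ioo (t₁ - ε) t₂, HasDerivAt z (riccatiField f g t (z t)) t) :
    Tendsto y (𝓝[>] t₁) atTop := by
  have hmem : ∀ {t a b : ℝ}, t ∈ Ioo (-b) (-a) → -t ∈ Ioo a b := fun ht =>
    ⟨by linarith [ht.2], by linarith [ht.1]⟩
  have hs' : -s ∈ 𝓝 (-t₁) := continuous_neg.tendsto' (-t₁) t₁ (neg_neg t₁) hs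
  have hreflected := tendsto_atBot_of_riccati_not_extendable_right (f := fun s => f (-s))
    (g := fun s => g (-s)) (y := fun s => -y (-s)) hs'
    (hf.comp continuousOn_neg fun _ => id) (hg.comp continuousOn_neg fun _ => id)
    (fun t ht => hf0 (-t) (hmem ht)) (neg_lt_neg h12)
    (fun t ht => hasDerivAt_riccatiField_neg_comp_neg (hy (-t) (hmem ht)))
    (fun ε hε ⟨z, hzy, hz⟩ => hmax ε hε ⟨fun s => -z (-s), fun t ht => ?_, fun t ht => ?_⟩)
  · have hneg : Tendsto Neg.neg (𝓝[>] t₁) (𝓝[<] (-t₁)) := by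
      simpa using tendsto_neg_nhdsGT_neg (a := -t₁)
    simpa [Function.comp_def] using tendsto_neg_atBot_atTop.comp (hreflected.comp hneg)
  · show -z (-t) = y t
    rw [hzy (hmem (by simpa using ht)), neg_neg, neg_neg]
  · simpa using hasDerivAt_riccatiField_neg_comp_neg
      (hz (-t) ⟨by linarith [ht.2], by linarith [ht.1]⟩)

/-- If `(t₁,t₂) ⊂ (t₀,τ₀)` is the maximal existence interval of a solution `y` of the
Riccati equation `y' + f y² + g = 0` with `f ≥ 0`, then `y → -∞` at `t₂⁻` and
`y → +∞` at `t₁⁺`. -/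
theorem riccati_blowup_at_maximal_endpoints
    (t₀ τ₀ : ℝ) (f g : ℝ → ℝ)
    (hf : ContinuousOn f (Ico t₀ τ₀)) (hg : ContinuousOn g (Ico t₀ τ₀))
    (hf0 : ∀ t ∈ Ico t₀ τ₀, 0 ≤ f t)
    (t₁ t₂ : ℝ) (h01 : t₀ < t₁) (h12 : t₁ < t₂) (h2τ : t₂ < τ₀)
    (y : ℝ → ℝ)
    (hy : ∀ t ∈ Ioo t₁ t₂, HasDerivAt y (-(f t * y t ^ 2 + g t)) t)
    -- maximality: any solution on an interval `(s₁,s₂) ⊆ (t₀,τ₀)` containing `(t₁,t₂)`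
    -- and agreeing with `y` on `(t₁,t₂)` forces `s₁ = t₁` and `s₂ = t₂`
    (hmax : ∀ s₁ s₂ : ℝ, t₀ ≤ s₁ → s₁ ≤ t₁ → t₂ ≤ s₂ → s₂ ≤ τ₀ →
      (∃ z : ℝ → ℝ, (∀ t ∈ Ioo t₁ t₂, z t = y t) ∧
        ∀ t ∈ Ioo s₁ s₂, HasDerivAt z (-(f t * z t ^ 2 + g t)) t) →
      s₁ = t₁ ∧ s₂ = t₂) :
    Tendsto y (nhdsWithin t₂ (Iio t₂)) atBot ∧
    Tendsto y (nhdsWithin t₁ (Ioi t₁)) atTop := by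
  have hf' : ContinuousOn f (Ioo t₀ τ₀) := hf.mono Ioo_subset_Ico_self
  have hg' : ContinuousOn g (Ioo t₀ τ₀) := hg.mono Ioo_subset_Ico_self
  have hf0' : ∀ t ∈ Ioo t₁ t₂, 0 ≤ f t := fun t ht => hf0 t ⟨by linarith [ht.1], by linarith [ht.2]⟩
  refine ⟨tendsto_atBot_of_riccati_not_extendable_right (Ioo_mem_nhds (h01.trans h12) h2τ) hf' hg'
      hf0' h12 hy ?_,
    tendsto_atTop_of_riccati_not_extendable_left (Ioo_mem_nhds h01 (h12.trans h2τ)) hf' hg'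
      hf0' h12 hy ?_⟩
  · rintro ε hε ⟨z, hzy, hz⟩
    have := hmax t₁ (min (t₂ + ε) τ₀) h01.le le_rfl (le_min (by linarith) h2τ.le) (min_le_right _ _)
      ⟨z, fun t ht => hzy ht, fun t ht => hz t ⟨ht.1, ht.2.trans_le (min_le_left _ _)⟩⟩
    exact (lt_min (by linarith) h2τ).ne' this.2
  · rintro ε hε ⟨z, hzy, hz⟩
    have := hmax (max (t₁ - ε) t₀) t₂ (le_max_right _ _) (max_le (by linarith) h01.le) le_rfl h2τ.le
      ⟨z, fun t ht => hzy ht, fun t ht => hz t ⟨(le_max_left _ _).trans_lt ht.1, ht.2⟩⟩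
    exact (max_lt (by linarith) h01).ne this.1
end

section
/- Let f₁, g₁, f₂, g₂ be continuous on [t₀, τ₀) with f₁(t) ≥ 0. Let y₂ solve y' + f₂y² + g₂ = 0 on [t₀, τ₀), let η₁ and η₂ solve the inequalities η' + fⱼη² + gⱼ ≥ 0 (j = 1,2) on [t₀, τ₀), with y₂(t₀) ≤ ηⱼ(t₀) for j = 1,2. Suppose there exists y₍₀₎ ∈ [y₂(t₀), η₁(t₀)] such that for all t ∈ [t₀, τ₀): y₍₀₎ - y₂(t₀) + ∫_{t₀}^t exp{∫_{t₀}^τ f₁(s)(η₁(s)+η₂(s))ds} · [(f₂(τ)-f₁(τ))y₂(τ)² + g₂(τ) - g₁(τ)] dτ ≥ 0. Then the Riccati equation y' + f₁y² + g₁ = 0 has a solution y₁ on all of [t₀, τ₀) with y₁(t₀) ≥ y₍₀₎ and y₁(t) ≥ y₂(t) for all t ∈ [t₀, τ₀). -/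
/-!
On each `[t₀, T]` with `T < τ₀`, the solution `α` of the first equation with `α t₀ = η₁ t₀` is
trapped between `y₂` and `η₁`. Since `η₁` and `η₂` are supersolutions, Grönwall gives `α ≤ η₁`
and `y₂ ≤ η₂`, hence `f₁ (α + y₂) ≤ f₁ (η₁ + η₂)`. The difference `w = α - y₂` solves the linear
equation `w' + f₁ (α + y₂) w = (f₂ - f₁) y₂² + g₂ - g₁`, and comparing its integrating factor with
`exp ∫ f₁ (η₁ + η₂)` turns the integral hypothesis into `w ≥ 0`. These a priori bounds give a
solution on every `[t₀, T]` (Picard–Lindelöf for the equation with its quadratic term clamped),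
and uniqueness glues these solutions into one on `[t₀, τ₀)`.
-/

open Set intervalIntegral Filter Topology

theorem le_of_hasDerivAt_nonneg {a b : ℝ} {u u' : ℝ → ℝ} (hu : ContinuousOn u (Icc a b))
    (hd : ∀ x ∈ Ioo a b, HasDerivAt u (u' x) x) (hnonneg : ∀ x ∈ Ioo a b, 0 ≤ u' x) :
    ∀ t ∈ Icc a b, u a ≤ u t := fun t ht =>
  monotoneOn_of_hasDerivWithinAt_nonneg (convex_Icc a b) hu
    (by simpa using fun x hx => (hd x hx).hasDerivWithinAt) (by simpa using hnonneg)
    (left_mem_Icc.2 (ht.1.trans ht.2)) ht ht.1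

theorem continuousOn_primitive_Icc {a b : ℝ} {c : ℝ → ℝ} (hab : a ≤ b)
    (hc : ContinuousOn c (Icc a b)) : ContinuousOn (fun t => ∫ s in a..t, c s) (Icc a b) := by
  rw [← uIcc_of_le hab] at hc ⊢
  exact continuousOn_primitive_interval hc.integrableOn_uIcc

theorem hasDerivAt_primitive_of_continuousOn {a b x : ℝ} {c : ℝ → ℝ}
    (hc : ContinuousOn c (Icc a b)) (hx : x ∈ Ioo a b) :
    HasDerivAt (fun t => ∫ s in a..t, c s) (c x) x :=
  integral_hasDerivAt_right
    ((hc.mono (Icc_subset_Icc_right hx.2.le)).intervalIntegrable_of_Icc hx.1.le)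
    ((hc.mono Ioo_subset_Icc_self).stronglyMeasurableAtFilter isOpen_Ioo x hx)
    (hc.continuousAt (Icc_mem_nhds hx.1 hx.2))

theorem nonpos_of_hasDerivAt_le_mul {a b : ℝ} {u u' c : ℝ → ℝ}
    (hu : ContinuousOn u (Icc a b)) (hc : ContinuousOn c (Icc a b))
    (hd : ∀ x ∈ Ioo a b, HasDerivAt u (u' x) x) (hle : ∀ x ∈ Ioo a b, u' x ≤ c x * u x)
    (ha : u a ≤ 0) : ∀ t ∈ Icc a b, u t ≤ 0 := by
  intro t ht
  have hI := continuousOn_primitive_Icc (ht.1.trans ht.2) hc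
  have hmono := le_of_hasDerivAt_nonneg
    (u := fun t => -(u t * Real.exp (-∫ s in a..t, c s)))
    (u' := fun x => (c x * u x - u' x) * Real.exp (-∫ s in a..x, c s))
    (hu.mul (Real.continuous_exp.comp_continuousOn hI.neg)).neg
    (fun x hx =>
      ((hd x hx).mul (hasDerivAt_primitive_of_continuousOn hc hx).neg.exp).neg.congr_deriv
        (by simp only [Pi.neg_apply]; ring))
    (fun x hx => mul_nonneg (sub_nonneg.2 (hle x hx)) (Real.exp_pos _).le) t ht
  simp only [integral_same, neg_zero, Real.exp_zero, mul_one, neg_le_neg_iff] at hmono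
  exact nonpos_of_mul_nonpos_left (hmono.trans ha) (Real.exp_pos _)

/-- A continuous Abel summation: `H - φ G` has derivative `-φ' G ≥ 0`. -/
theorem mul_le_of_hasDerivAt_eq_mul {a b : ℝ} {H G G' φ φ' : ℝ → ℝ}
    (hH : ContinuousOn H (Icc a b)) (hG : ContinuousOn G (Icc a b))
    (hφ : ContinuousOn φ (Icc a b))
    (hGd : ∀ x ∈ Ioo a b, HasDerivAt G (G' x) x) (hφd : ∀ x ∈ Ioo a b, HasDerivAt φ (φ' x) x)
    (hHd : ∀ x ∈ Ioo a b, HasDerivAt H (φ x * G' x) x)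
    (hG0 : ∀ x ∈ Ioo a b, 0 ≤ G x) (hφ' : ∀ x ∈ Ioo a b, φ' x ≤ 0) (ha : H a = φ a * G a) :
    ∀ t ∈ Icc a b, φ t * G t ≤ H t := by
  intro t ht
  have := le_of_hasDerivAt_nonneg (u := fun t => H t - φ t * G t) (u' := fun x => -φ' x * G x)
    (hH.sub (hφ.mul hG))
    (fun x hx => ((hHd x hx).sub ((hφd x hx).mul (hGd x hx))).congr_deriv (by ring))
    (fun x hx => mul_nonneg (neg_nonneg.2 (hφ' x hx)) (hG0 x hx)) t ht
  simp only [ha, sub_self] at this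
  linarith

theorem exists_antideriv_of_continuousOn {a b : ℝ} {c : ℝ → ℝ} (hab : a ≤ b)
    (hc : ContinuousOn c (Icc a b)) :
    ∃ I : ℝ → ℝ, ContinuousOn I (Icc a b) ∧ I a = 0 ∧ ∀ x ∈ Ioo a b, HasDerivAt I (c x) x :=
  ⟨fun t => ∫ s in a..t, c s, continuousOn_primitive_Icc hab hc, integral_same,
    fun _ hx => hasDerivAt_primitive_of_continuousOn hc hx⟩

theorem riccati_le_of_supersolution {a b : ℝ} {f g y η η' : ℝ → ℝ}
    (hf : ContinuousOn f (Icc a b)) (hy : ContinuousOn y (Icc a b))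
    (hη : ContinuousOn η (Icc a b))
    (hyd : ∀ t ∈ Ioo a b, HasDerivAt y (-(f t * y t ^ 2 + g t)) t)
    (hηd : ∀ t ∈ Ioo a b, HasDerivAt η (η' t) t)
    (hsuper : ∀ t ∈ Ioo a b, 0 ≤ η' t + f t * η t ^ 2 + g t) (ha : y a ≤ η a) :
    ∀ t ∈ Icc a b, y t ≤ η t := fun t ht =>
  sub_nonpos.1 <| nonpos_of_hasDerivAt_le_mul (u := fun x => y x - η x)
    (c := fun x => -(f x * (y x + η x))) (hy.sub hη) (hf.mul (hy.add hη)).neg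
    (fun x hx => (hyd x hx).sub (hηd x hx))
    (fun x hx => by nlinarith [hsuper x hx]) (sub_nonpos.2 ha) t ht

theorem riccati_eqOn {a b : ℝ} {f g y z : ℝ → ℝ} (hf : ContinuousOn f (Icc a b))
    (hy : ContinuousOn y (Icc a b)) (hz : ContinuousOn z (Icc a b))
    (hyd : ∀ t ∈ Ioo a b, HasDerivAt y (-(f t * y t ^ 2 + g t)) t)
    (hzd : ∀ t ∈ Ioo a b, HasDerivAt z (-(f t * z t ^ 2 + g t)) t) (ha : y a = z a) :
    EqOn y z (Icc a b) := fun t ht =>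
  le_antisymm
    (riccati_le_of_supersolution hf hy hz hyd hzd (fun _ _ => le_of_eq (by ring)) ha.le t ht)
    (riccati_le_of_supersolution hf hz hy hzd hyd (fun _ _ => le_of_eq (by ring)) ha.ge t ht)

theorem riccati_le_of_integral_nonneg {a b A : ℝ} {f₁ g₁ f₂ g₂ Q y₁ y₂ : ℝ → ℝ}
    (hf₁ : ContinuousOn f₁ (Icc a b)) (hg₁ : ContinuousOn g₁ (Icc a b))
    (hf₂ : ContinuousOn f₂ (Icc a b)) (hg₂ : ContinuousOn g₂ (Icc a b))
    (hQ : ContinuousOn Q (Icc a b))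
    (hy₁ : ContinuousOn y₁ (Icc a b)) (hy₂ : ContinuousOn y₂ (Icc a b))
    (hy₁d : ∀ t ∈ Ioo a b, HasDerivAt y₁ (-(f₁ t * y₁ t ^ 2 + g₁ t)) t)
    (hy₂d : ∀ t ∈ Ioo a b, HasDerivAt y₂ (-(f₂ t * y₂ t ^ 2 + g₂ t)) t)
    (hQ_ge : ∀ t ∈ Ioo a b, f₁ t * (y₁ t + y₂ t) ≤ Q t) (hA : A ≤ y₁ a - y₂ a)
    (hint : ∀ t ∈ Icc a b, 0 ≤ A + ∫ τ in a..t,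
      Real.exp (∫ s in a..τ, Q s) * ((f₂ τ - f₁ τ) * y₂ τ ^ 2 + g₂ τ - g₁ τ)) :
    ∀ t ∈ Icc a b, y₂ t ≤ y₁ t := by
  intro t ht
  have hab : a ≤ b := ht.1.trans ht.2
  set F : ℝ → ℝ := fun τ => (f₂ τ - f₁ τ) * y₂ τ ^ 2 + g₂ τ - g₁ τ with hF
  have hFc : ContinuousOn F (Icc a b) := (((hf₂.sub hf₁).mul (hy₂.pow 2)).add hg₂).sub hg₁
  obtain ⟨IP, hIPc, hIPa, hIPd⟩ := exists_antideriv_of_continuousOn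
    (c := fun t => f₁ t * (y₁ t + y₂ t)) hab (hf₁.mul (hy₁.add hy₂))
  have hIQc := continuousOn_primitive_Icc hab hQ
  have hEF : ContinuousOn (fun τ => Real.exp (∫ s in a..τ, Q s) * F τ) (Icc a b) :=
    (Real.continuous_exp.comp_continuousOn hIQc).mul hFc
  have key := mul_le_of_hasDerivAt_eq_mul
    (H := fun t => Real.exp (IP t) * (y₁ t - y₂ t) - (y₁ a - y₂ a - A))
    (G := fun t => A + ∫ τ in a..t, Real.exp (∫ s in a..τ, Q s) * F τ)
    (φ := fun t => Real.exp (IP t - ∫ s in a..t, Q s))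
    (φ' := fun t => Real.exp (IP t - ∫ s in a..t, Q s) * (f₁ t * (y₁ t + y₂ t) - Q t))
    (((Real.continuous_exp.comp_continuousOn hIPc).mul (hy₁.sub hy₂)).sub continuousOn_const)
    (continuousOn_const.add (continuousOn_primitive_Icc hab hEF))
    (Real.continuous_exp.comp_continuousOn (hIPc.sub hIQc))
    (fun x hx => (hasDerivAt_primitive_of_continuousOn hEF hx).const_add A)
    (fun x hx => ((hIPd x hx).sub (hasDerivAt_primitive_of_continuousOn hQ hx)).exp)
    (fun x hx => by
      refine ((((hIPd x hx).exp).mul ((hy₁d x hx).sub (hy₂d x hx))).sub_const _).congr_deriv ?_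
      have hexp : Real.exp (IP x - ∫ s in a..x, Q s) * (Real.exp (∫ s in a..x, Q s) * F x) =
          Real.exp (IP x) * F x := by rw [← mul_assoc, ← Real.exp_add, sub_add_cancel]
      rw [hexp, hF, Pi.sub_apply]
      ring)
    (fun x hx => hint x (Ioo_subset_Icc_self hx))
    (fun x hx => mul_nonpos_of_nonneg_of_nonpos (Real.exp_pos _).le
      (sub_nonpos.2 (hQ_ge x hx)))
    (by simp [hIPa]) t ht
  have hφG : 0 ≤ Real.exp (IP t - ∫ s in a..t, Q s) * (A + ∫ τ in a..t,
      Real.exp (∫ s in a..τ, Q s) * F τ) := mul_nonneg (Real.exp_pos _).le (hint t ht)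
  have : 0 ≤ Real.exp (IP t) * (y₁ t - y₂ t) := by beta_reduce at key; linarith
  exact sub_nonneg.1 (nonneg_of_mul_nonneg_right this (Real.exp_pos _))

theorem exists_clamped_riccati_solution {a b N x₀ : ℝ} {f g : ℝ → ℝ} (hab : a ≤ b) (hN : 0 ≤ N)
    (hf : ContinuousOn f (Icc a b)) (hg : ContinuousOn g (Icc a b)) :
    ∃ α : ℝ → ℝ, α a = x₀ ∧ ∀ t ∈ Icc a b, HasDerivWithinAt α
      (-(f t * (projIcc (-N) N (neg_le_self hN) (α t) : ℝ) ^ 2 + g t)) (Icc a b) t := by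
  set p : ℝ → ℝ := fun y => projIcc (-N) N (neg_le_self hN) y
  have hp : ∀ y, |p y| ≤ N := fun y => abs_le.2 (projIcc (-N) N (neg_le_self hN) y).2
  obtain ⟨Mf, hMf⟩ := isCompact_Icc.exists_bound_of_continuousOn hf
  obtain ⟨Mg, hMg⟩ := isCompact_Icc.exists_bound_of_continuousOn hg
  have hMf0 : 0 ≤ Mf := (norm_nonneg _).trans (hMf a (left_mem_Icc.2 hab))
  have hMg0 : 0 ≤ Mg := (norm_nonneg _).trans (hMg a (left_mem_Icc.2 hab))
  set M : ℝ := Mf * N ^ 2 + Mg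
  have hM0 : 0 ≤ M := by positivity
  have hpl : IsPicardLindelof (fun t y => -(f t * p y ^ 2 + g t)) (tmin := a) (tmax := b)
      ⟨a, left_mem_Icc.2 hab⟩ x₀ (M * (b - a)).toNNReal 0 M.toNNReal (2 * N * Mf).toNNReal := by
    refine ⟨fun t ht => LipschitzOnWith.of_dist_le_mul fun y _ z _ => ?_,
      fun y _ => ((hf.mul continuousOn_const).add hg).neg, fun t ht y _ => ?_, ?_⟩
    · have hyz : -(f t * p y ^ 2 + g t) - -(f t * p z ^ 2 + g t) =
          -f t * ((p y + p z) * (p y - p z)) := by ring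
      rw [Real.dist_eq, Real.dist_eq, hyz, abs_mul, abs_neg, abs_mul,
        Real.coe_toNNReal _ (by positivity)]
      have hsum : |p y + p z| ≤ 2 * N := (abs_add_le _ _).trans (by linarith [hp y, hp z])
      have hdiff : |p y - p z| ≤ |y - z| := abs_projIcc_sub_projIcc _
      calc |f t| * (|p y + p z| * |p y - p z|) ≤ Mf * (2 * N * |y - z|) := by
            gcongr
            · exact hMf t ht
        _ = 2 * N * Mf * |y - z| := by ring
    · rw [Real.norm_eq_abs, abs_neg, Real.coe_toNNReal _ hM0]
      have hsq : p y ^ 2 ≤ N ^ 2 := sq_le_sq' (abs_le.1 (hp y)).1 (abs_le.1 (hp y)).2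
      calc |f t * p y ^ 2 + g t| ≤ |f t| * p y ^ 2 + |g t| := by
            have := abs_add_le (f t * p y ^ 2) (g t)
            rwa [abs_mul, abs_of_nonneg (sq_nonneg (p y))] at this
        _ ≤ Mf * N ^ 2 + Mg := by gcongr; exacts [hMf t ht, hMg t ht]
    · simp [Real.coe_toNNReal _ hM0, sub_nonneg.2 hab]
  exact hpl.exists_eq_forall_mem_Icc_hasDerivWithinAt₀

theorem Icc_subset_between_of_trapping {a b N : ℝ} {α l u : ℝ → ℝ}
    (hα : ContinuousOn α (Icc a b)) (hl : ContinuousOn l (Icc a b))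
    (hu : ContinuousOn u (Icc a b)) (hN : ∀ s ∈ Icc a b, ∀ y, l s ≤ y → y ≤ u s → |y| < N)
    (ha : l a ≤ α a ∧ α a ≤ u a)
    (htrap : ∀ c ∈ Icc a b, (∀ s ∈ Icc a c, |α s| ≤ N) → ∀ s ∈ Icc a c, l s ≤ α s ∧ α s ≤ u s) :
    Icc a b ⊆ {t | l t ≤ α t ∧ α t ≤ u t} := by
  refine IsClosed.Icc_subset_of_forall_mem_nhdsGT_of_Icc_subset ?_ ha fun t ht hKt => ?_
  · convert (isClosed_Icc.isClosed_le hl hα).inter (isClosed_Icc.isClosed_le hα hu) using 1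
    ext x
    simp only [mem_inter_iff, mem_ofPred_eq]
    tauto
  have htab : t ∈ Icc a b := Ico_subset_Icc_self ht
  have hNt : |α t| < N := hN t htab _ (hKt ⟨ht.1, le_rfl⟩).1 (hKt ⟨ht.1, le_rfl⟩).2
  have hcont : ContinuousWithinAt α (Ici t) t :=
    (hα t htab).mono_of_mem_nhdsWithin (Icc_mem_nhdsGE_of_mem ht)
  obtain ⟨c, htc, hc⟩ := mem_nhdsGE_iff_exists_Icc_subset.1
    (inter_mem (hcont.abs.eventually_lt_const hNt) (Icc_mem_nhdsGE_of_mem ht))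
  have hcb : c ∈ Icc a b := (hc ⟨htc.le, le_rfl⟩).2
  have hKc := htrap c hcb fun s hs => by
    rcases le_total s t with hst | hts
    · exact (hN s ⟨hs.1, hst.trans htab.2⟩ _ (hKt ⟨hs.1, hst⟩).1 (hKt ⟨hs.1, hst⟩).2).le
    · exact (hc ⟨hts, hs.2⟩).1.le
  exact mem_of_superset (Ioc_mem_nhdsGT htc) fun s hs => hKc s ⟨ht.1.trans hs.1.le, hs.2⟩

/-- Solve the equation with its quadratic term clamped at a level `N` above `|l|` and `|u|`:
the clamp is inactive while the bounds hold. -/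
theorem exists_riccati_solution_of_apriori_bounds {a b x₀ : ℝ} {f g l u : ℝ → ℝ} (hab : a ≤ b)
    (hf : ContinuousOn f (Icc a b)) (hg : ContinuousOn g (Icc a b))
    (hl : ContinuousOn l (Icc a b)) (hu : ContinuousOn u (Icc a b))
    (hbound : ∀ c ∈ Icc a b, ∀ α : ℝ → ℝ, ContinuousOn α (Icc a c) → α a = x₀ →
      (∀ t ∈ Ioo a c, HasDerivAt α (-(f t * α t ^ 2 + g t)) t) →
      ∀ t ∈ Icc a c, l t ≤ α t ∧ α t ≤ u t) :
    ∃ α : ℝ → ℝ, α a = x₀ ∧ ∀ t ∈ Icc a b,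
      HasDerivWithinAt α (-(f t * α t ^ 2 + g t)) (Icc a b) t ∧ l t ≤ α t ∧ α t ≤ u t := by
  obtain ⟨Ml, hMl⟩ := isCompact_Icc.exists_bound_of_continuousOn hl
  obtain ⟨Mu, hMu⟩ := isCompact_Icc.exists_bound_of_continuousOn hu
  set N := max Ml Mu + 1
  have hN : 0 ≤ N := by
    linarith [le_max_left Ml Mu, (norm_nonneg _).trans (hMl a (left_mem_Icc.2 hab))]
  have hlt_N : ∀ s ∈ Icc a b, ∀ y, l s ≤ y → y ≤ u s → |y| < N := fun s hs y hly hyu => by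
    have hls : |l s| ≤ Ml := by simpa only [Real.norm_eq_abs] using hMl s hs
    have hus : |u s| ≤ Mu := by simpa only [Real.norm_eq_abs] using hMu s hs
    exact abs_lt.2 ⟨by linarith [neg_abs_le (l s), le_max_left Ml Mu],
      by linarith [le_abs_self (u s), le_max_right Ml Mu]⟩
  obtain ⟨α, hα0, hαd⟩ := exists_clamped_riccati_solution (x₀ := x₀) hab hN hf hg
  have hαc : ContinuousOn α (Icc a b) := fun t ht => (hαd t ht).continuousWithinAt
  have hsol : ∀ s ∈ Icc a b, |α s| ≤ N →
      HasDerivWithinAt α (-(f s * α s ^ 2 + g s)) (Icc a b) s := fun s hs hsN => by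
    have h := hαd s hs
    rwa [projIcc_of_mem _ (abs_le.1 hsN)] at h
  have hK := Icc_subset_between_of_trapping hαc hl hu hlt_N
    (hbound a (left_mem_Icc.2 hab) α (hαc.mono (Icc_subset_Icc_right hab)) hα0
      (fun t ht => by simp at ht) a (left_mem_Icc.2 le_rfl))
    fun c hc hbdd => hbound c hc α (hαc.mono (Icc_subset_Icc_right hc.2)) hα0 fun s hs =>
      (hsol s ⟨hs.1.le, hs.2.le.trans hc.2⟩ (hbdd s (Ioo_subset_Icc_self hs))).hasDerivAt
        (Icc_mem_nhds hs.1 (hs.2.trans_le hc.2))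
  exact ⟨α, hα0, fun t ht => ⟨hsol t ht (hlt_N t ht _ (hK ht).1 (hK ht).2).le, hK ht⟩⟩

theorem HasDerivWithinAt.hasDerivAt_extend_left {y : ℝ → ℝ} {y' a : ℝ}
    (h : HasDerivWithinAt y y' (Ici a) a) :
    HasDerivAt (fun t => if t < a then y a + y' * (t - a) else y t) y' a := by
  have hline : HasDerivAt (fun t => y a + y' * (t - a)) y' a := by
    simpa using (((hasDerivAt_id a).sub_const a).const_mul y').const_add (y a)
  have hleft : HasDerivWithinAt (fun t => if t < a then y a + y' * (t - a) else y t) y'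
      (Iic a) a := by
    refine hline.hasDerivWithinAt.congr (fun t ht => ?_) (by simp)
    rcases (mem_Iic.1 ht).lt_or_eq with hta | rfl
    · simp [hta]
    · simp
  have hright : HasDerivWithinAt (fun t => if t < a then y a + y' * (t - a) else y t) y'
      (Ici a) a := h.congr (fun t ht => if_neg (not_lt.2 ht)) (if_neg (lt_irrefl a))
  simpa only [Iic_union_Ici, hasDerivWithinAt_univ] using hleft.union hright

theorem exists_riccati_solution_Ico {a b x₀ : ℝ} {f g : ℝ → ℝ} {P : ℝ → ℝ → Prop} (hab : a < b)
    (hf : ContinuousOn f (Ico a b))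
    (hsol : ∀ T ∈ Ioo a b, ∃ α : ℝ → ℝ, α a = x₀ ∧ ∀ t ∈ Icc a T,
      HasDerivWithinAt α (-(f t * α t ^ 2 + g t)) (Icc a T) t ∧ P t (α t)) :
    ∃ y : ℝ → ℝ, y a = x₀ ∧
      ∀ t ∈ Ico a b, HasDerivAt y (-(f t * y t ^ 2 + g t)) t ∧ P t (y t) := by
  choose! sol hsol0 hsold using hsol
  have hderiv : ∀ T ∈ Ioo a b, ∀ T' ∈ Icc a T, ∀ t ∈ Ioo a T',
      HasDerivAt (sol T) (-(f t * sol T t ^ 2 + g t)) t := fun T hT T' hT' t ht =>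
    (hsold T hT t ⟨ht.1.le, ht.2.le.trans hT'.2⟩).1.hasDerivAt
      (Icc_mem_nhds ht.1 (ht.2.trans_le hT'.2))
  have hcont : ∀ T ∈ Ioo a b, ContinuousOn (sol T) (Icc a T) := fun T hT t ht =>
    (hsold T hT t ht).1.continuousWithinAt
  have hcompat : ∀ T ∈ Ioo a b, ∀ T' ∈ Ioo a b, T ≤ T' → EqOn (sol T) (sol T') (Icc a T) :=
    fun T hT T' hT' hTT' => riccati_eqOn (hf.mono (Icc_subset_Ico_right hT.2)) (hcont T hT)
      ((hcont T' hT').mono (Icc_subset_Icc_right hTT')) (hderiv T hT T (right_mem_Icc.2 hT.1.le))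
      (hderiv T' hT' T ⟨hT.1.le, hTT'⟩) ((hsol0 T hT).trans (hsol0 T' hT').symm)
  have hm : ∀ t ∈ Ico a b, (t + b) / 2 ∈ Ioo a b ∧ t < (t + b) / 2 := fun t ht =>
    ⟨⟨by linarith [ht.1, ht.2], by linarith [ht.2]⟩, by linarith [ht.2]⟩
  set z : ℝ → ℝ := fun t => sol ((t + b) / 2) t
  have hz : ∀ T ∈ Ioo a b, ∀ t ∈ Icc a T, z t = sol T t := fun T hT t ht => by
    have htm := hm t ⟨ht.1, ht.2.trans_lt hT.2⟩
    rcases le_total ((t + b) / 2) T with h | h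
    · exact hcompat _ htm.1 T hT h ⟨ht.1, htm.2.le⟩
    · exact (hcompat T hT _ htm.1 h ht).symm
  obtain ⟨hT₀, haT₀⟩ := hm a ⟨le_rfl, hab⟩
  have hzT₀ := hz _ hT₀ a (left_mem_Icc.2 haT₀.le)
  have hzd : HasDerivWithinAt z (-(f a * z a ^ 2 + g a)) (Ici a) a := by
    have h := ((hsold _ hT₀ a (left_mem_Icc.2 haT₀.le)).1.mono_of_mem_nhdsWithin
      (Icc_mem_nhdsGE haT₀))
    rw [← hzT₀] at h
    refine h.congr_of_eventuallyEq ?_ hzT₀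
    filter_upwards [Icc_mem_nhdsGE haT₀] with s hs using hz _ hT₀ s hs
  -- extended linearly to the left of `a`, so that the derivative at `a` is two-sided
  set y : ℝ → ℝ := fun t => if t < a then z a + -(f a * z a ^ 2 + g a) * (t - a) else z t
  have hyz : ∀ t, a ≤ t → y t = z t := fun t ht => if_neg (not_lt.2 ht)
  refine ⟨y, (hyz a le_rfl).trans (hzT₀.trans (hsol0 _ hT₀)), fun t ht => ⟨?_, ?_⟩⟩
  · rcases ht.1.eq_or_lt with rfl | hat
    · rw [hyz a le_rfl]
      exact hzd.hasDerivAt_extend_left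
    · obtain ⟨hT, htT⟩ := hm t ht
      have h := hderiv _ hT _ (right_mem_Icc.2 hT.1.le) t ⟨hat, htT⟩
      rw [← hz _ hT t ⟨ht.1, htT.le⟩, ← hyz t ht.1] at h
      refine h.congr_of_eventuallyEq ?_
      filter_upwards [Ioo_mem_nhds hat htT] with s hs
      rw [hyz s hs.1.le]
      exact hz _ hT s ⟨hs.1.le, hs.2.le⟩
  · rw [hyz t ht.1]
    exact (hsold _ (hm t ht).1 t ⟨ht.1, (hm t ht).2.le⟩).2

theorem riccati_apriori_bounds {a b y₀ : ℝ} {f₁ g₁ f₂ g₂ y₂ η₁ η₁' η₂ α : ℝ → ℝ}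
    (hf₁ : ContinuousOn f₁ (Icc a b)) (hg₁ : ContinuousOn g₁ (Icc a b))
    (hf₂ : ContinuousOn f₂ (Icc a b)) (hg₂ : ContinuousOn g₂ (Icc a b))
    (hf₁0 : ∀ t ∈ Ioo a b, 0 ≤ f₁ t)
    (hy₂ : ContinuousOn y₂ (Icc a b))
    (hy₂d : ∀ t ∈ Ioo a b, HasDerivAt y₂ (-(f₂ t * y₂ t ^ 2 + g₂ t)) t)
    (hη₁ : ContinuousOn η₁ (Icc a b)) (hη₁d : ∀ t ∈ Ioo a b, HasDerivAt η₁ (η₁' t) t)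
    (hη₁super : ∀ t ∈ Ioo a b, 0 ≤ η₁' t + f₁ t * η₁ t ^ 2 + g₁ t)
    (hη₂ : ContinuousOn η₂ (Icc a b)) (hy₂η₂ : ∀ t ∈ Ioo a b, y₂ t ≤ η₂ t) (hy₀ : y₀ ≤ η₁ a)
    (hint : ∀ t ∈ Icc a b, 0 ≤ y₀ - y₂ a + ∫ τ in a..t,
      Real.exp (∫ s in a..τ, f₁ s * (η₁ s + η₂ s)) * ((f₂ τ - f₁ τ) * y₂ τ ^ 2 + g₂ τ - g₁ τ))
    (hα : ContinuousOn α (Icc a b)) (hαa : α a = η₁ a)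
    (hαd : ∀ t ∈ Ioo a b, HasDerivAt α (-(f₁ t * α t ^ 2 + g₁ t)) t) :
    ∀ t ∈ Icc a b, y₂ t ≤ α t ∧ α t ≤ η₁ t := by
  have hαη₁ := riccati_le_of_supersolution hf₁ hα hη₁ hαd hη₁d hη₁super hαa.le
  refine fun t ht => ⟨riccati_le_of_integral_nonneg hf₁ hg₁ hf₂ hg₂
    (hf₁.mul (hη₁.add hη₂)) hα hy₂ hαd hy₂d (fun s hs => ?_) (by linarith) hint t ht, hαη₁ t ht⟩
  exact mul_le_mul_of_nonneg_left (add_le_add (hαη₁ s (Ioo_subset_Icc_self hs)) (hy₂η₂ s hs))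
    (hf₁0 s hs)

theorem riccati_comparison_general
    (t₀ τ₀ : ℝ) (h : t₀ < τ₀) (f₁ g₁ f₂ g₂ : ℝ → ℝ)
    (hf₁ : ContinuousOn f₁ (Ico t₀ τ₀)) (hg₁ : ContinuousOn g₁ (Ico t₀ τ₀))
    (hf₂ : ContinuousOn f₂ (Ico t₀ τ₀)) (hg₂ : ContinuousOn g₂ (Ico t₀ τ₀))
    (hf₁0 : ∀ t ∈ Ico t₀ τ₀, 0 ≤ f₁ t)
    (y₂ : ℝ → ℝ)
    (hy₂ : ∀ t ∈ Ico t₀ τ₀, HasDerivAt y₂ (-(f₂ t * y₂ t ^ 2 + g₂ t)) t)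
    (η₁ η₁' η₂ η₂' : ℝ → ℝ)
    (hη₁d : ∀ t ∈ Ico t₀ τ₀, HasDerivAt η₁ (η₁' t) t)
    (hη₁ : ∀ t ∈ Ico t₀ τ₀, 0 ≤ η₁' t + f₁ t * η₁ t ^ 2 + g₁ t)
    (hη₂d : ∀ t ∈ Ico t₀ τ₀, HasDerivAt η₂ (η₂' t) t)
    (hη₂ : ∀ t ∈ Ico t₀ τ₀, 0 ≤ η₂' t + f₂ t * η₂ t ^ 2 + g₂ t)
    (hinit₂ : y₂ t₀ ≤ η₂ t₀)
    (y₀ : ℝ) (hy₀mem : y₀ ∈ Icc (y₂ t₀) (η₁ t₀))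
    (hint : ∀ t ∈ Ico t₀ τ₀,
      0 ≤ y₀ - y₂ t₀ + ∫ τ in t₀..t,
        Real.exp (∫ s in t₀..τ, f₁ s * (η₁ s + η₂ s)) *
          ((f₂ τ - f₁ τ) * y₂ τ ^ 2 + g₂ τ - g₁ τ)) :
    ∃ y₁ : ℝ → ℝ,
      y₀ ≤ y₁ t₀ ∧
      (∀ t ∈ Ico t₀ τ₀, HasDerivAt y₁ (-(f₁ t * y₁ t ^ 2 + g₁ t)) t) ∧
      ∀ t ∈ Ico t₀ τ₀, y₂ t ≤ y₁ t := by
  have hy₂c := HasDerivAt.continuousOn hy₂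
  have hη₁c := HasDerivAt.continuousOn hη₁d
  have hη₂c := HasDerivAt.continuousOn hη₂d
  have hIcc : ∀ {c}, c < τ₀ → Icc t₀ c ⊆ Ico t₀ τ₀ := Icc_subset_Ico_right
  have hIoo : ∀ {c}, c < τ₀ → Ioo t₀ c ⊆ Ico t₀ τ₀ := fun hc => Ioo_subset_Icc_self.trans (hIcc hc)
  have hy₂η₂ : ∀ t ∈ Ico t₀ τ₀, y₂ t ≤ η₂ t := fun t ht =>
    riccati_le_of_supersolution (hf₂.mono (hIcc ht.2)) (hy₂c.mono (hIcc ht.2))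
      (hη₂c.mono (hIcc ht.2)) (fun s hs => hy₂ s (hIoo ht.2 hs))
      (fun s hs => hη₂d s (hIoo ht.2 hs)) (fun s hs => hη₂ s (hIoo ht.2 hs)) hinit₂ t
      (right_mem_Icc.2 ht.1)
  obtain ⟨y₁, hy₁0, hy₁⟩ := exists_riccati_solution_Ico (x₀ := η₁ t₀)
    (P := fun t y => y₂ t ≤ y ∧ y ≤ η₁ t) h hf₁ fun T hT => by
      refine exists_riccati_solution_of_apriori_bounds hT.1.le (hf₁.mono (hIcc hT.2))
        (hg₁.mono (hIcc hT.2)) (hy₂c.mono (hIcc hT.2)) (hη₁c.mono (hIcc hT.2))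
        fun c hc α hαc hα0 hαd => ?_
      have hcτ : c < τ₀ := hc.2.trans_lt hT.2
      exact riccati_apriori_bounds (hf₁.mono (hIcc hcτ)) (hg₁.mono (hIcc hcτ))
        (hf₂.mono (hIcc hcτ)) (hg₂.mono (hIcc hcτ)) (fun s hs => hf₁0 s (hIoo hcτ hs))
        (hy₂c.mono (hIcc hcτ)) (fun s hs => hy₂ s (hIoo hcτ hs)) (hη₁c.mono (hIcc hcτ))
        (fun s hs => hη₁d s (hIoo hcτ hs)) (fun s hs => hη₁ s (hIoo hcτ hs))
        (hη₂c.mono (hIcc hcτ)) (fun s hs => hy₂η₂ s (hIoo hcτ hs)) hy₀mem.2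
        (fun s hs => hint s (hIcc hcτ hs)) hαc hα0 hαd
  exact ⟨y₁, hy₁0 ▸ hy₀mem.2, fun t ht => (hy₁ t ht).1, fun t ht => (hy₁ t ht).2.1⟩

/-- Theorem 2.1: comparison theorem for two Riccati equations.  Under the stated
integral condition, the first Riccati equation has a global solution `y₁` on `[t₀,τ₀)`
with `y₁(t₀) ≥ y₍₀₎` and `y₁ ≥ y₂`. -/
theorem riccati_comparison
    (t₀ τ₀ : ℝ) (h : t₀ < τ₀) (f₁ g₁ f₂ g₂ : ℝ → ℝ)
    (hf₁ : ContinuousOn f₁ (Ico t₀ τ₀)) (hg₁ : ContinuousOn g₁ (Ico t₀ τ₀))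
    (hf₂ : ContinuousOn f₂ (Ico t₀ τ₀)) (hg₂ : ContinuousOn g₂ (Ico t₀ τ₀))
    (hf₁0 : ∀ t ∈ Ico t₀ τ₀, 0 ≤ f₁ t)
    (y₂ : ℝ → ℝ)
    (hy₂ : ∀ t ∈ Ico t₀ τ₀, HasDerivAt y₂ (-(f₂ t * y₂ t ^ 2 + g₂ t)) t)
    (η₁ η₁' η₂ η₂' : ℝ → ℝ)
    (hη₁d : ∀ t ∈ Ico t₀ τ₀, HasDerivAt η₁ (η₁' t) t)
    (hη₁ : ∀ t ∈ Ico t₀ τ₀, 0 ≤ η₁' t + f₁ t * η₁ t ^ 2 + g₁ t)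
    (hη₂d : ∀ t ∈ Ico t₀ τ₀, HasDerivAt η₂ (η₂' t) t)
    (hη₂ : ∀ t ∈ Ico t₀ τ₀, 0 ≤ η₂' t + f₂ t * η₂ t ^ 2 + g₂ t)
    (hinit₁ : y₂ t₀ ≤ η₁ t₀) (hinit₂ : y₂ t₀ ≤ η₂ t₀)
    (y₀ : ℝ) (hy₀mem : y₀ ∈ Icc (y₂ t₀) (η₁ t₀))
    (hint : ∀ t ∈ Ico t₀ τ₀,
      0 ≤ y₀ - y₂ t₀ + ∫ τ in t₀..t,
        Real.exp (∫ s in t₀..τ, f₁ s * (η₁ s + η₂ s)) *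
          ((f₂ τ - f₁ τ) * y₂ τ ^ 2 + g₂ τ - g₁ τ)) :
    ∃ y₁ : ℝ → ℝ,
      y₀ ≤ y₁ t₀ ∧
      (∀ t ∈ Ico t₀ τ₀, HasDerivAt y₁ (-(f₁ t * y₁ t ^ 2 + g₁ t)) t) ∧
      ∀ t ∈ Ico t₀ τ₀, y₂ t ≤ y₁ t :=
  riccati_comparison_general t₀ τ₀ h f₁ g₁ f₂ g₂ hf₁ hg₁ hf₂ hg₂ hf₁0 y₂ hy₂ η₁ η₁' η₂ η₂' hη₁d hη₁
    hη₂d hη₂ hinit₂ y₀ hy₀mem hint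
end

section
/- Let f₁, g₁ be continuous on [a,b] and let z be the solution of the complex Riccati equation z' + f₁(t)z² + g₁(t) = 0 with z(a) = i. Then z exists on all of [a,b], the imaginary part y(t) = Im z(t) is strictly positive on [a,b], and every nontrivial solution (φ, ψ) of the system φ' = f₁ψ, ψ' = -g₁φ satisfies φ(t) = (μ/√y(t)) · sin(∫_a^t f₁(τ)y(τ)dτ + θ) for some real constants μ ≠ 0 and θ. -/
/-!
Solve the linear system with complex data `(u, v)(a) = (1, i)`; it exists on all of `[a, b]`
because the system is linear. The Wronskian of `(u, v)` with its conjugate is constant, so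
`Im (v ū) = 1`: hence `u` never vanishes, `z = v / u` solves the Riccati equation, and
`Im z = 1 / |u|²`. Since `u' = f₁ z u`, `u = exp (∫ f₁ z)`, so `|u| = (Im z)^(-1/2)` and
`arg u = ∫ f₁ Im z`. For a real solution `(φ, ψ)`, its Wronskian `w` with `(u, v)` is constant;
multiplying `φ v - ψ u = w` by `ū` and taking imaginary parts gives `φ = Im (w ū)`, which is the
claimed representation with `μ = -|w|`, and `w ≠ 0` unless `(φ, ψ)` is trivial.
-/

open Set intervalIntegral MeasureTheory Complex ComplexConjugate

theorem ContinuousOn.exists_continuous_eqOn_Icc {X : Type*} [TopologicalSpace X] {f : ℝ → X}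
    {a b : ℝ} (hab : a ≤ b) (hf : ContinuousOn f (Icc a b)) :
    ∃ F : ℝ → X, Continuous F ∧ EqOn F f (Icc a b) ∧ range F = f '' Icc a b :=
  ⟨IccExtend hab ((Icc a b).domRestrict f), hf.domRestrict.Icc_extend',
    fun _ ht => IccExtend_of_mem hab _ ht, by rw [IccExtend_range, range_domRestrict]⟩

theorem eq_of_hasDerivAt_zero_of_mem_Icc {E : Type*} [NormedAddCommGroup E] [NormedSpace ℝ E]
    {f : ℝ → E} {a b : ℝ} (hf : ∀ t ∈ Icc a b, HasDerivAt f 0 t) :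
    ∀ t ∈ Icc a b, f t = f a :=
  constant_of_has_deriv_right_zero (fun t ht => (hf t ht).continuousAt.continuousWithinAt)
    fun t ht => (hf t (Ico_subset_Icc_self ht)).hasDerivWithinAt

section IntegralCurve

variable {E : Type*} [NormedAddCommGroup E] [NormedSpace ℝ E] {v : ℝ → E → E}

theorem IsIntegralCurveOn.congr {γ γ' : ℝ → E} {s : Set ℝ} (h : IsIntegralCurveOn γ v s)
    (hγ : EqOn γ' γ s) : IsIntegralCurveOn γ' v s := fun t ht => by
  rw [hγ ht]
  exact (h t ht).congr_of_mem hγ ht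

theorem IsIntegralCurveOn.union_of_isClosed {γ : ℝ → E} {s s' : Set ℝ}
    (h : IsIntegralCurveOn γ v s) (h' : IsIntegralCurveOn γ v s') (hs : IsClosed s)
    (hs' : IsClosed s') : IsIntegralCurveOn γ v (s ∪ s') := by
  have key : ∀ {s : Set ℝ}, IsClosed s → IsIntegralCurveOn γ v s → ∀ t,
      HasDerivWithinAt γ (v t (γ t)) s t := fun {s} hs h t => by
    by_cases ht : t ∈ s
    · exact h t ht
    · exact hasDerivWithinAt_iff_hasFDerivWithinAt.2
        (.of_notMem_closure (hs.closure_eq.symm ▸ ht))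
  exact fun t _ => (key hs h t).union (key hs' h' t)

theorem IsIntegralCurveOn.ite_Icc {γ₁ γ₂ : ℝ → E} {c d e : ℝ} (hcd : c ≤ d) (hde : d ≤ e)
    (h₁ : IsIntegralCurveOn γ₁ v (Icc c d)) (h₂ : IsIntegralCurveOn γ₂ v (Icc d e))
    (hd : γ₁ d = γ₂ d) :
    IsIntegralCurveOn (fun t => if t ≤ d then γ₁ t else γ₂ t) v (Icc c e) := by
  rw [← Icc_union_Icc_eq_Icc hcd hde]
  refine (h₁.congr fun t ht => if_pos ht.2).union_of_isClosed
    (h₂.congr fun t ht => ?_) isClosed_Icc isClosed_Icc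
  rcases ht.1.eq_or_lt with rfl | hlt
  · simp [hd]
  · simp [hlt.not_ge]

end IntegralCurve

section LinearODE

open scoped NNReal

variable {E : Type*} [NormedAddCommGroup E] [NormedSpace ℝ E] [CompleteSpace E]
  {A : ℝ → E →L[ℝ] E} {K : ℝ≥0}

-- With step `(2K + 2)⁻¹`, the growth bound `‖A t y‖ ≤ K ‖y‖` keeps the Picard iterates in the
-- ball of radius `‖x₀‖ + 1` about `x₀`.
theorem exists_isIntegralCurveOn_Icc_of_norm_le (hA : Continuous A) (hK : ∀ t, ‖A t‖ ≤ K)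
    (c : ℝ) (x₀ : E) :
    ∃ x : ℝ → E, x c = x₀ ∧ IsIntegralCurveOn x (fun t => A t)
      (Icc (c - (2 * (K : ℝ) + 2)⁻¹) (c + (2 * (K : ℝ) + 2)⁻¹)) := by
  set δ : ℝ := (2 * (K : ℝ) + 2)⁻¹
  have hδ : 0 < δ := by positivity
  have hpl : IsPicardLindelof (fun t => A t) (tmin := c - δ) (tmax := c + δ)
      ⟨c, by constructor <;> linarith⟩ x₀ (‖x₀‖₊ + 1) 0 (K * (2 * ‖x₀‖₊ + 1)) K := by
    refine ⟨fun t _ => ((A t).lipschitz.weaken (hK t)).lipschitzOnWith,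
      fun y _ => (hA.clm_apply continuous_const).continuousOn, fun t _ y hy => ?_, ?_⟩
    · have hy' : ‖y‖ ≤ 2 * ‖x₀‖ + 1 := by
        have := norm_le_norm_add_norm_sub' y x₀
        have := mem_closedBall_iff_norm.mp hy
        push_cast at *
        linarith
      calc ‖A t y‖ ≤ ‖A t‖ * ‖y‖ := (A t).le_opNorm y
        _ ≤ K * (2 * ‖x₀‖ + 1) := by gcongr; exact hK t
        _ = _ := by push_cast; ring
    · have hmax : max (c + δ - c) (c - (c - δ)) = δ := by simp
      push_cast
      rw [hmax, sub_zero]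
      have : (K : ℝ) * δ ≤ 1 / 2 := by
        rw [mul_inv_le_iff₀ (by positivity)]
        linarith
      nlinarith [norm_nonneg x₀]
  exact hpl.exists_eq_forall_mem_Icc_hasDerivWithinAt₀

theorem exists_isIntegralCurveOn_Icc_nat_of_norm_le (hA : Continuous A) (hK : ∀ t, ‖A t‖ ≤ K)
    (a : ℝ) (x₀ : E) (n : ℕ) :
    ∃ x : ℝ → E, x a = x₀ ∧ IsIntegralCurveOn x (fun t => A t)
      (Icc (a - (2 * (K : ℝ) + 2)⁻¹) (a + (n + 1) * (2 * (K : ℝ) + 2)⁻¹)) := by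
  set δ : ℝ := (2 * (K : ℝ) + 2)⁻¹
  have hδ : 0 < δ := by positivity
  induction n with
  | zero => simpa using exists_isIntegralCurveOn_Icc_of_norm_le hA hK a x₀
  | succ n ih =>
    obtain ⟨x, hxa, hx⟩ := ih
    set d := a + (n + 1) * δ
    have had : a ≤ d := le_add_of_nonneg_right (by positivity)
    obtain ⟨y, hyd, hy⟩ := exists_isIntegralCurveOn_Icc_of_norm_le hA hK d (x d)
    refine ⟨fun t => if t ≤ d then x t else y t, by simp [had, hxa], ?_⟩
    convert hx.ite_Icc (by linarith) (by linarith)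
      (hy.mono (Icc_subset_Icc_left (by linarith))) hyd.symm using 2
    push_cast
    ring

theorem exists_forall_mem_Icc_hasDerivAt_of_norm_le (hA : Continuous A) (hK : ∀ t, ‖A t‖ ≤ K)
    (a b : ℝ) (x₀ : E) : ∃ x : ℝ → E, x a = x₀ ∧ ∀ t ∈ Icc a b, HasDerivAt x (A t (x t)) t := by
  set δ : ℝ := (2 * (K : ℝ) + 2)⁻¹
  have hδ : 0 < δ := by positivity
  obtain ⟨n, hn⟩ := exists_nat_gt ((b - a) / δ)
  obtain ⟨x, hxa, hx⟩ := exists_isIntegralCurveOn_Icc_nat_of_norm_le hA hK a x₀ n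
  refine ⟨x, hxa, fun t ht => hx t ⟨by linarith [ht.1], ?_⟩ |>.hasDerivAt (Icc_mem_nhds ?_ ?_)⟩
  all_goals
    rw [div_lt_iff₀ hδ] at hn
    nlinarith [ht.1, ht.2]

theorem exists_forall_mem_Icc_hasDerivAt_of_continuousOn {a b : ℝ} (hab : a ≤ b)
    (hA : ContinuousOn A (Icc a b)) (x₀ : E) :
    ∃ x : ℝ → E, x a = x₀ ∧ ∀ t ∈ Icc a b, HasDerivAt x (A t (x t)) t := by
  obtain ⟨B, hB, hBA, hBrange⟩ := hA.exists_continuous_eqOn_Icc hab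
  obtain ⟨C, hC⟩ := isCompact_Icc.exists_bound_of_continuousOn hA
  have hBC : ∀ t, ‖B t‖ ≤ C.toNNReal := fun t => by
    obtain ⟨s, hs, hst⟩ := hBrange.subset (mem_range_self t)
    exact hst ▸ (hC s hs).trans (Real.le_coe_toNNReal C)
  obtain ⟨x, hxa, hx⟩ := exists_forall_mem_Icc_hasDerivAt_of_norm_le hB hBC a b x₀
  exact ⟨x, hxa, fun t ht => hBA ht ▸ hx t ht⟩

end LinearODE

theorem eq_mul_exp_integral_of_hasDerivAt {u h : ℝ → ℂ} {a b : ℝ}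
    (hh : ContinuousOn h (Icc a b)) (hu : ∀ t ∈ Icc a b, HasDerivAt u (h t * u t) t) :
    ∀ t ∈ Icc a b, u t = u a * exp (∫ τ in a..t, h τ) := by
  intro t ht
  obtain ⟨H, hH, hHh, -⟩ := hh.exists_continuous_eqOn_Icc (ht.1.trans ht.2)
  have hD : ∀ s ∈ Icc a b, HasDerivAt (fun s => u s * exp (-∫ τ in a..s, H τ)) 0 s := by
    intro s hs
    refine ((hu s hs).mul (hH.integral_hasStrictDerivAt a s).hasDerivAt.neg.cexp).congr_deriv ?_
    rw [hHh hs]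
    ring
  have hconst := eq_of_hasDerivAt_zero_of_mem_Icc hD t ht
  rw [integral_same, neg_zero, exp_zero, mul_one] at hconst
  rw [← integral_congr fun τ hτ => hHh (uIcc_subset_Icc (left_mem_Icc.2 (ht.1.trans ht.2)) ht hτ),
    ← hconst, mul_assoc, ← exp_add, neg_add_cancel, exp_zero, mul_one]

theorem IntervalIntegrable.integral_im {h : ℝ → ℂ} {a b : ℝ}
    (hh : IntervalIntegrable h volume a b) :
    ∫ τ in a..b, (h τ).im = (∫ τ in a..b, h τ).im :=
  imCLM.intervalIntegral_comp_comm hh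

theorem Complex.im_mul_exp (w ζ : ℂ) :
    (w * exp ζ).im = ‖w‖ * Real.exp ζ.re * Real.sin (arg w + ζ.im) := by
  conv_lhs => rw [← norm_mul_exp_arg_mul_I w]
  rw [mul_assoc, ← exp_add, im_ofReal_mul, exp_im]
  simp [mul_assoc]

theorem Complex.im_mul_conj_mul_exp (w c ζ : ℂ) :
    (w * conj (c * exp ζ)).im =
      -‖w‖ / √(1 / normSq (c * exp ζ)) * Real.sin (ζ.im + -arg (w * conj c)) := by
  have hsqrt : √(1 / normSq (c * exp ζ)) = (‖c‖ * Real.exp ζ.re)⁻¹ := by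
    rw [normSq_mul, normSq_eq_norm_sq, normSq_eq_norm_sq, norm_exp, one_div, ← mul_pow,
      Real.sqrt_inv, Real.sqrt_sq (by positivity)]
  rw [hsqrt, map_mul, ← exp_conj, ← mul_assoc, im_mul_exp, norm_mul, norm_conj, conj_re, conj_im,
    show ζ.im + -arg (w * conj c) = -(arg (w * conj c) + -ζ.im) by ring, Real.sin_neg,
    div_inv_eq_mul]
  ring

theorem Complex.div_im_eq_mul_conj_im (z w : ℂ) : (z / w).im = (z * conj w).im / normSq w := by
  rw [div_im, mul_im, conj_re, conj_im]
  ring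

-- Complex-valued, so that real solutions (via `ofReal`) and the complex solution defining `z`
-- are instances of the same notion.
def IsLinearSystemSolution (f g : ℝ → ℝ) (s : Set ℝ) (u v : ℝ → ℂ) : Prop :=
  ∀ t ∈ s, HasDerivAt u (f t * v t) t ∧ HasDerivAt v (-(g t * u t)) t

namespace IsLinearSystemSolution

variable {f g : ℝ → ℝ} {s : Set ℝ} {u v : ℝ → ℂ} {a b : ℝ}

theorem ofReal {φ ψ : ℝ → ℝ} (hφ : ∀ t ∈ s, HasDerivAt φ (f t * ψ t) t)
    (hψ : ∀ t ∈ s, HasDerivAt ψ (-(g t * φ t)) t) :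
    IsLinearSystemSolution f g s (fun t => φ t) (fun t => ψ t) := fun t ht => by
  constructor
  · simpa using (hφ t ht).ofReal_comp
  · simpa using (hψ t ht).ofReal_comp

theorem comp_conj (h : IsLinearSystemSolution f g s u v) :
    IsLinearSystemSolution f g s (fun t => conj (u t)) (fun t => conj (v t)) := fun t ht => by
  constructor
  · simpa using (h t ht).1.star
  · simpa using (h t ht).2.star

theorem wronskian_eq {u₂ v₂ : ℝ → ℂ} (h : IsLinearSystemSolution f g (Icc a b) u v)
    (h₂ : IsLinearSystemSolution f g (Icc a b) u₂ v₂) :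
    ∀ t ∈ Icc a b, u t * v₂ t - v t * u₂ t = u a * v₂ a - v a * u₂ a :=
  eq_of_hasDerivAt_zero_of_mem_Icc fun t ht => by
    obtain ⟨hu, hv⟩ := h t ht
    obtain ⟨hu₂, hv₂⟩ := h₂ t ht
    convert (hu.fun_mul hv₂).fun_sub (hv.fun_mul hu₂) using 1
    ring

theorem im_mul_conj_eq (h : IsLinearSystemSolution f g (Icc a b) u v) :
    ∀ t ∈ Icc a b, (v t * conj (u t)).im = (v a * conj (u a)).im := fun t ht => by
  have := congrArg im (h.wronskian_eq h.comp_conj t ht)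
  simp only [sub_im, mul_im, conj_re, conj_im] at this ⊢
  linarith

theorem mul_im_mul_conj_eq {φ ψ : ℝ → ℝ} (h : IsLinearSystemSolution f g (Icc a b) u v)
    (hφψ : IsLinearSystemSolution f g (Icc a b) (fun t => φ t) (fun t => ψ t)) :
    ∀ t ∈ Icc a b, φ t * (v t * conj (u t)).im = ((φ a * v a - ψ a * u a) * conj (u t)).im :=
  fun t ht => by
    rw [← hφψ.wronskian_eq h t ht]
    simp only [sub_mul, sub_im, mul_im, mul_re, conj_re, conj_im, ofReal_re, ofReal_im]
    ring

theorem hasDerivAt_div (h : IsLinearSystemSolution f g s u v) {t : ℝ} (ht : t ∈ s)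
    (hu : u t ≠ 0) : HasDerivAt (fun t => v t / u t) (-(f t * (v t / u t) ^ 2 + g t)) t := by
  refine ((h t ht).2.div (h t ht).1 hu).congr_deriv ?_
  field_simp
  ring

theorem wronskian_ne_zero {φ ψ : ℝ → ℝ} (h : IsLinearSystemSolution f g (Icc a b) u v)
    (hW : ∀ t ∈ Icc a b, (v t * conj (u t)).im = 1)
    (hφψ : IsLinearSystemSolution f g (Icc a b) (fun t => φ t) (fun t => ψ t))
    (hnt : ∃ t ∈ Icc a b, φ t ≠ 0 ∨ ψ t ≠ 0) :
    (φ a : ℂ) * v a - ψ a * u a ≠ 0 := by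
  intro hw
  obtain ⟨t, ht, hne⟩ := hnt
  have hu : u t ≠ 0 := fun hu0 => by simpa [hu0] using hW t ht
  have hφ : φ t = 0 := by simpa [hW t ht, hw] using h.mul_im_mul_conj_eq hφψ t ht
  have hψ : ψ t = 0 := by
    have hwt := (hφψ.wronskian_eq h t ht).trans hw
    rw [hφ, ofReal_zero, zero_mul, zero_sub, neg_eq_zero] at hwt
    exact_mod_cast (mul_eq_zero.1 hwt).resolve_right hu
  exact hne.elim (· hφ) (· hψ)

theorem exists_eq_div_sqrt_mul_sin {φ ψ : ℝ → ℝ} (hf : ContinuousOn f (Icc a b))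
    (h : IsLinearSystemSolution f g (Icc a b) u v)
    (hW : ∀ t ∈ Icc a b, (v t * conj (u t)).im = 1)
    (hφψ : IsLinearSystemSolution f g (Icc a b) (fun t => φ t) (fun t => ψ t))
    (hnt : ∃ t ∈ Icc a b, φ t ≠ 0 ∨ ψ t ≠ 0) :
    ∃ μ θ : ℝ, μ ≠ 0 ∧ ∀ t ∈ Icc a b, φ t = μ / √(v t / u t).im *
      Real.sin ((∫ τ in a..t, f τ * (v τ / u τ).im) + θ) := by
  have hu : ∀ t ∈ Icc a b, u t ≠ 0 := fun t ht hu0 => by simpa [hu0] using hW t ht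
  set w := φ a * v a - ψ a * u a
  have hφ : ∀ t ∈ Icc a b, φ t = (w * conj (u t)).im := fun t ht => by
    simpa only [hW t ht, mul_one] using h.mul_im_mul_conj_eq hφψ t ht
  have hfz : ContinuousOn (fun t => (f t : ℂ) * (v t / u t)) (Icc a b) :=
    (continuous_ofReal.comp_continuousOn hf).mul <| ContinuousOn.div
      (fun t ht => (h t ht).2.continuousAt.continuousWithinAt)
      (fun t ht => (h t ht).1.continuousAt.continuousWithinAt) hu
  have hexp := eq_mul_exp_integral_of_hasDerivAt hfz fun t ht =>
    (h t ht).1.congr_deriv (by field_simp [hu t ht])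
  refine ⟨-‖w‖, -arg (w * conj (u a)), by simpa using h.wronskian_ne_zero hW hφψ hnt,
    fun t ht => ?_⟩
  have hint : IntervalIntegrable (fun t => (f t : ℂ) * (v t / u t)) volume a t :=
    (hfz.mono (uIcc_subset_Icc (left_mem_Icc.2 (ht.1.trans ht.2)) ht)).intervalIntegrable
  rw [div_im_eq_mul_conj_im, hW t ht, hφ t ht, hexp t ht, im_mul_conj_mul_exp,
    ← hint.integral_im]
  simp only [im_ofReal_mul]

end IsLinearSystemSolution

theorem exists_isLinearSystemSolution {f g : ℝ → ℝ} {a b : ℝ} (hab : a ≤ b)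
    (hf : ContinuousOn f (Icc a b)) (hg : ContinuousOn g (Icc a b)) (u₀ v₀ : ℂ) :
    ∃ u v : ℝ → ℂ, u a = u₀ ∧ v a = v₀ ∧ IsLinearSystemSolution f g (Icc a b) u v := by
  set A : ℝ → ℂ × ℂ →L[ℝ] ℂ × ℂ := fun t =>
    f t • (.inl ℝ ℂ ℂ ∘L .snd ℝ ℂ ℂ) - g t • (.inr ℝ ℂ ℂ ∘L .fst ℝ ℂ ℂ)
  obtain ⟨x, hxa, hx⟩ := exists_forall_mem_Icc_hasDerivAt_of_continuousOn hab
    ((hf.smul continuousOn_const).sub (hg.smul continuousOn_const) : ContinuousOn A _) (u₀, v₀)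
  refine ⟨fun t => (x t).1, fun t => (x t).2, by simp [hxa], by simp [hxa], fun t ht => ?_⟩
  constructor
  · simpa [A, Function.comp_def] using
      (ContinuousLinearMap.fst ℝ ℂ ℂ).hasFDerivAt.comp_hasDerivAt t (hx t ht)
  · simpa [A, Function.comp_def] using
      (ContinuousLinearMap.snd ℝ ℂ ℂ).hasFDerivAt.comp_hasDerivAt t (hx t ht)

/-- The complex Riccati equation `z' + f₁ z² + g₁ = 0` with `z(a) = i` has a solution on
all of `[a,b]`, with `Im z > 0`, and every nontrivial real solution `(φ,ψ)` of
`φ' = f₁ ψ, ψ' = -g₁ φ` has the representation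
`φ(t) = (μ/√(Im z(t))) sin(∫_a^t f₁ (Im z) + θ)`. -/
theorem complex_riccati_representation
    (a b : ℝ) (hab : a < b) (f₁ g₁ : ℝ → ℝ)
    (hf : ContinuousOn f₁ (Icc a b)) (hg : ContinuousOn g₁ (Icc a b)) :
    ∃ z : ℝ → ℂ,
      (∀ t ∈ Icc a b, HasDerivAt z (-((f₁ t : ℂ) * z t ^ 2 + (g₁ t : ℂ))) t) ∧
      z a = Complex.I ∧
      (∀ t ∈ Icc a b, 0 < (z t).im) ∧
      ∀ φ ψ : ℝ → ℝ,
        (∀ t ∈ Icc a b, HasDerivAt φ (f₁ t * ψ t) t) →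
        (∀ t ∈ Icc a b, HasDerivAt ψ (-(g₁ t * φ t)) t) →
        (∃ t ∈ Icc a b, φ t ≠ 0 ∨ ψ t ≠ 0) →
        ∃ μ θ : ℝ, μ ≠ 0 ∧ ∀ t ∈ Icc a b,
          φ t = μ / Real.sqrt ((z t).im) *
            Real.sin ((∫ τ in a..t, f₁ τ * (z τ).im) + θ) := by
  obtain ⟨u, v, hua, hva, huv⟩ := exists_isLinearSystemSolution hab.le hf hg 1 I
  have hW : ∀ t ∈ Icc a b, (v t * conj (u t)).im = 1 := fun t ht => by
    simpa [hua, hva] using huv.im_mul_conj_eq t ht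
  have hu : ∀ t ∈ Icc a b, u t ≠ 0 := fun t ht hu0 => by simpa [hu0] using hW t ht
  refine ⟨fun t => v t / u t, fun t ht => huv.hasDerivAt_div ht (hu t ht), by simp [hua, hva],
    fun t ht => ?_, fun φ ψ hφ hψ hnt =>
      huv.exists_eq_div_sqrt_mul_sin hf hW (.ofReal hφ hψ) hnt⟩
  rw [div_im_eq_mul_conj_im, hW t ht]
  exact one_div_pos.2 (normSq_pos.2 (hu t ht))
end

section
/- Let f₁, g₁ be continuous on [a,b] and let (φ, ψ) be a nontrivial solution of φ' = f₁(t)ψ, ψ' = -g₁(t)φ. Then φ has only finitely many null-classes on [a,b], and these null-classes are linearly ordered by the relation ≺ (x ≺ y iff every element of x is less than every element of y). -/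
/-!
Put `y = Im z` and `χ = ψ - z φ`. The Riccati equation for `z` makes `χ` solve the linear
equation `χ' = -f₁ z χ`, so `χ t = χ a · exp (-∫ₐᵗ f₁ z)` with `χ a ≠ 0`. Taking imaginary parts,
`φ` can only vanish where the phase `θ t = ∫ₐᵗ f₁ y` is congruent to `arg (χ a)` modulo `π`.
Hence `θ` is constant on every null-element, and two null-elements are congenerous exactly when
`θ` stays within `π` of this common value between them; this is an equivalence relation. Uniform
continuity of `θ` on `[a, b]` keeps points of distinct null-classes a fixed distance apart, which
gives finiteness; and a point of one class lying to the left of a point of another would let the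
two `π`-bands around `θ` cover the gap between them, making the classes congenerous.
-/

open Set intervalIntegral

/-- The zero set of `φ` within `[a,b]`. -/
def ZeroSet (φ : ℝ → ℝ) (a b : ℝ) : Set ℝ := {t ∈ Set.Icc a b | φ t = 0}

/-- A null-element of `φ`: a connected component of the zero set of `φ` in `[a,b]`. -/
def IsNullElement (φ : ℝ → ℝ) (a b : ℝ) (N : Set ℝ) : Prop :=
  ∃ t ∈ ZeroSet φ a b, N = connectedComponentIn (ZeroSet φ a b) t

/-- Null-elements `N₁`, `N₂` of `φ` are congenerous (with respect to the weight `f·y`) if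
`|∫_{t₁}^{t} f y| < π` for all `t₁ ∈ N₁`, `t₂ ∈ N₂` and all `t` between `t₁` and `t₂`. -/
def Congenerous (f y φ : ℝ → ℝ) (a b : ℝ) (N₁ N₂ : Set ℝ) : Prop :=
  IsNullElement φ a b N₁ ∧ IsNullElement φ a b N₂ ∧
  ∀ t₁ ∈ N₁, ∀ t₂ ∈ N₂, ∀ t ∈ Set.uIcc t₁ t₂, |∫ τ in t₁..t, f τ * y τ| < Real.pi

/-- A null-class of `φ`: an equivalence class of congenerous null-elements. -/
def IsNullClass (f y φ : ℝ → ℝ) (a b : ℝ) (C : Set (Set ℝ)) : Prop :=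
  ∃ N, IsNullElement φ a b N ∧ C = {M | Congenerous f y φ a b N M}

/-- The ordering `x ≺ y` on subsets of `ℝ`: every element of `x` is less than
every element of `y`. -/
def SetLT (x y : Set ℝ) : Prop := ∀ s ∈ x, ∀ t ∈ y, s < t

open Real Metric

lemma eq_of_sin_eq_zero_of_dist_lt {x y : ℝ} (hx : sin x = 0) (hy : sin y = 0)
    (h : dist x y < π) : x = y := by
  rw [Real.dist_eq, abs_lt] at h
  have hsin : sin (x - y) = 0 := by simp [Real.sin_sub, hx, hy]
  exact sub_eq_zero.mp ((sin_eq_zero_iff_of_lt_of_lt h.1 h.2).mp hsin)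

lemma Set.Finite.of_subset_Icc_of_pairwise_le_dist {S : Set ℝ} {a b δ : ℝ}
    (hS : S ⊆ Icc a b) (hδ : 0 < δ) (hsep : S.Pairwise fun s t => δ ≤ dist s t) :
    S.Finite := by
  refine Set.Finite.of_finite_image (f := fun s => ⌊s / δ⌋)
    ((Set.finite_Icc ⌊a / δ⌋ ⌊b / δ⌋).subset ?_) fun s hs t ht hst => ?_
  · rintro _ ⟨s, hs, rfl⟩
    exact ⟨Int.floor_mono (div_le_div_of_nonneg_right (hS hs).1 hδ.le),
      Int.floor_mono (div_le_div_of_nonneg_right (hS hs).2 hδ.le)⟩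
  · by_contra hne
    have hlt := Int.abs_sub_lt_one_of_floor_eq_floor hst
    rw [← sub_div, abs_div, abs_of_pos hδ, div_lt_one hδ] at hlt
    exact (hsep hs ht hne).not_gt hlt

namespace IsNullElement

variable {φ : ℝ → ℝ} {a b : ℝ} {N : Set ℝ}

lemma nonempty (hN : IsNullElement φ a b N) : N.Nonempty := by
  obtain ⟨t, ht, rfl⟩ := hN
  exact ⟨t, mem_connectedComponentIn ht⟩

lemma subset_zeroSet (hN : IsNullElement φ a b N) : N ⊆ ZeroSet φ a b := by
  obtain ⟨t, -, rfl⟩ := hN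
  exact connectedComponentIn_subset _ _

lemma subset_Icc (hN : IsNullElement φ a b N) : N ⊆ Icc a b :=
  fun _ ht => (hN.subset_zeroSet ht).1

lemma ordConnected (hN : IsNullElement φ a b N) : N.OrdConnected := by
  obtain ⟨t, -, rfl⟩ := hN
  exact isPreconnected_connectedComponentIn.ordConnected

end IsNullElement

lemma IsNullClass.isNullElement_of_mem {f y φ : ℝ → ℝ} {a b : ℝ} {C : Set (Set ℝ)} {M : Set ℝ}
    (hC : IsNullClass f y φ a b C) (hM : M ∈ C) : IsNullElement φ a b M := by
  obtain ⟨N, -, rfl⟩ := hC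
  exact hM.2.1

structure IsPhase (f y φ : ℝ → ℝ) (a b α : ℝ) (θ : ℝ → ℝ) : Prop where
  continuousOn : ContinuousOn θ (Icc a b)
  integral_eq : ∀ s ∈ Icc a b, ∀ t ∈ Icc a b, ∫ τ in s..t, f τ * y τ = θ t - θ s
  sin_eq_zero : ∀ t ∈ ZeroSet φ a b, sin (θ t - α) = 0

namespace IsPhase

variable {f y φ θ : ℝ → ℝ} {a b α : ℝ} {s t : ℝ} {N N₁ N₂ N₃ M M' : Set ℝ}

lemma eq_of_dist_lt (hθ : IsPhase f y φ a b α θ) (hs : s ∈ ZeroSet φ a b)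
    (ht : t ∈ ZeroSet φ a b) (h : dist (θ t) (θ s) < π) : θ t = θ s := by
  have := eq_of_sin_eq_zero_of_dist_lt (hθ.sin_eq_zero t ht) (hθ.sin_eq_zero s hs)
    (by rwa [dist_sub_right])
  linarith

lemma eq_of_isNullElement (hθ : IsPhase f y φ a b α θ) (hN : IsNullElement φ a b N)
    (hs : s ∈ N) (ht : t ∈ N) : θ t = θ s := by
  wlog hlt : θ s < θ t generalizing s t
  · rcases (not_lt.mp hlt).lt_or_eq with h | h
    · exact (this ht hs h).symm
    · exact h
  have hgap : π ≤ θ t - θ s := by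
    by_contra! h
    have := hθ.eq_of_dist_lt (hN.subset_zeroSet hs) (hN.subset_zeroSet ht)
      (by rw [Real.dist_eq, abs_of_pos (sub_pos.mpr hlt)]; exact h)
    exact hlt.ne' this
  -- the image of `N` is an interval of values containing `θ s + π / 2`, which is not `≡ α (mod π)`
  have himage : IsPreconnected (θ '' N) :=
    hN.ordConnected.isPreconnected.image θ (hθ.continuousOn.mono hN.subset_Icc)
  obtain ⟨u, hu, hθu⟩ := himage.Icc_subset (mem_image_of_mem θ hs) (mem_image_of_mem θ ht)
    (show θ s + π / 2 ∈ Icc (θ s) (θ t) from ⟨by linarith [pi_pos], by linarith [pi_pos]⟩)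
  have := hθ.eq_of_dist_lt (hN.subset_zeroSet hs) (hN.subset_zeroSet hu)
    (by rw [hθu, Real.dist_eq, add_sub_cancel_left, abs_of_pos (by positivity)]; linarith [pi_pos])
  linarith [pi_pos]

lemma mapsTo_uIcc_of_mem (hθ : IsPhase f y φ a b α θ) (hN : IsNullElement φ a b N)
    (hs : s ∈ N) (ht : t ∈ N) : MapsTo θ (uIcc s t) (ball (θ s) π) := fun u hu => by
  rw [hθ.eq_of_isNullElement hN hs (hN.ordConnected.uIcc_subset hs ht hu)]
  exact mem_ball_self pi_pos

lemma congenerous_iff (hθ : IsPhase f y φ a b α θ) (h₁ : IsNullElement φ a b N₁)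
    (h₂ : IsNullElement φ a b N₂) (hs : s ∈ N₁) (ht : t ∈ N₂) :
    Congenerous f y φ a b N₁ N₂ ↔ MapsTo θ (uIcc s t) (ball (θ s) π) := by
  have hdist : ∀ {s t u}, s ∈ N₁ → t ∈ N₂ → u ∈ uIcc s t →
      |∫ τ in s..u, f τ * y τ| = dist (θ u) (θ s) := fun hs ht hu => by
    rw [hθ.integral_eq _ (h₁.subset_Icc hs) _
      (uIcc_subset_Icc (h₁.subset_Icc hs) (h₂.subset_Icc ht) hu), Real.dist_eq]
  constructor
  · rintro ⟨-, -, hc⟩ u hu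
    rw [mem_ball, ← hdist hs ht hu]
    exact hc s hs t ht u hu
  · intro hst
    refine ⟨h₁, h₂, fun s' hs' t' ht' u hu => ?_⟩
    have ht_eq : θ t = θ s :=
      hθ.eq_of_dist_lt (h₁.subset_zeroSet hs) (h₂.subset_zeroSet ht) (hst right_mem_uIcc)
    -- `[s', t'] ⊆ [s', s] ∪ [s, t] ∪ [t, t']`, where the outer pieces lie in `N₁` and `N₂`
    have hcover : MapsTo θ (uIcc s' t') (ball (θ s) π) := by
      refine fun u hu => ?_
      rcases uIcc_subset_uIcc_union_uIcc hu with hu | hu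
      · rw [← hθ.eq_of_isNullElement h₁ hs hs']
        exact hθ.mapsTo_uIcc_of_mem h₁ hs' hs hu
      rcases uIcc_subset_uIcc_union_uIcc hu with hu | hu
      · exact hst hu
      · rw [← ht_eq]
        exact hθ.mapsTo_uIcc_of_mem h₂ ht ht' hu
    rw [hdist hs' ht' hu, hθ.eq_of_isNullElement h₁ hs hs', ← mem_ball]
    exact hcover hu

lemma congenerous_refl (hθ : IsPhase f y φ a b α θ) (hN : IsNullElement φ a b N) :
    Congenerous f y φ a b N N := by
  obtain ⟨s, hs⟩ := hN.nonempty
  exact (hθ.congenerous_iff hN hN hs hs).mpr (hθ.mapsTo_uIcc_of_mem hN hs hs)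

lemma congenerous_symm (hθ : IsPhase f y φ a b α θ) (h : Congenerous f y φ a b N₁ N₂) :
    Congenerous f y φ a b N₂ N₁ := by
  have ⟨hN₁, hN₂, _⟩ := h
  obtain ⟨s, hs⟩ := hN₁.nonempty
  obtain ⟨t, ht⟩ := hN₂.nonempty
  rw [hθ.congenerous_iff hN₁ hN₂ hs ht] at h
  rw [hθ.congenerous_iff hN₂ hN₁ ht hs, uIcc_comm, hθ.eq_of_dist_lt (hN₁.subset_zeroSet hs)
    (hN₂.subset_zeroSet ht) (h right_mem_uIcc)]
  exact h

lemma congenerous_trans (hθ : IsPhase f y φ a b α θ) (h₁₂ : Congenerous f y φ a b N₁ N₂)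
    (h₂₃ : Congenerous f y φ a b N₂ N₃) : Congenerous f y φ a b N₁ N₃ := by
  have ⟨hN₁, hN₂, _⟩ := h₁₂
  have ⟨_, hN₃, _⟩ := h₂₃
  obtain ⟨s₁, hs₁⟩ := hN₁.nonempty
  obtain ⟨s₂, hs₂⟩ := hN₂.nonempty
  obtain ⟨s₃, hs₃⟩ := hN₃.nonempty
  rw [hθ.congenerous_iff hN₁ hN₂ hs₁ hs₂] at h₁₂
  rw [hθ.congenerous_iff hN₂ hN₃ hs₂ hs₃, hθ.eq_of_dist_lt (hN₁.subset_zeroSet hs₁)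
    (hN₂.subset_zeroSet hs₂) (h₁₂ right_mem_uIcc)] at h₂₃
  rw [hθ.congenerous_iff hN₁ hN₃ hs₁ hs₃]
  exact (h₁₂.union h₂₃).mono_left uIcc_subset_uIcc_union_uIcc

lemma setOf_congenerous_eq (hθ : IsPhase f y φ a b α θ) (h : Congenerous f y φ a b M M') :
    {X | Congenerous f y φ a b M X} = {X | Congenerous f y φ a b M' X} :=
  Set.ext fun _ => ⟨hθ.congenerous_trans (hθ.congenerous_symm h), hθ.congenerous_trans h⟩

lemma eq_setOf_congenerous (hθ : IsPhase f y φ a b α θ) {C : Set (Set ℝ)}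
    (hC : IsNullClass f y φ a b C) (hM : M ∈ C) : C = {X | Congenerous f y φ a b M X} := by
  obtain ⟨N, -, rfl⟩ := hC
  exact hθ.setOf_congenerous_eq hM

lemma not_congenerous_of_ne (hθ : IsPhase f y φ a b α θ) {C₁ C₂ : Set (Set ℝ)}
    (hC₁ : IsNullClass f y φ a b C₁) (hC₂ : IsNullClass f y φ a b C₂) (hne : C₁ ≠ C₂)
    (hM : M ∈ C₁) (hM' : M' ∈ C₂) : ¬ Congenerous f y φ a b M M' := fun h =>
  hne <| by rw [hθ.eq_setOf_congenerous hC₁ hM, hθ.eq_setOf_congenerous hC₂ hM',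
    hθ.setOf_congenerous_eq h]

variable {C C₁ C₂ : Set (Set ℝ)}

lemma nonempty_sUnion (hθ : IsPhase f y φ a b α θ) (hC : IsNullClass f y φ a b C) :
    (⋃₀ C).Nonempty := by
  obtain ⟨N, hN, rfl⟩ := hC
  obtain ⟨s, hs⟩ := hN.nonempty
  exact ⟨s, N, hθ.congenerous_refl hN, hs⟩

lemma exists_pos_le_dist (hθ : IsPhase f y φ a b α θ) :
    ∃ δ > 0, ∀ ⦃C₁ C₂⦄, IsNullClass f y φ a b C₁ → IsNullClass f y φ a b C₂ → C₁ ≠ C₂ →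
      ∀ s ∈ ⋃₀ C₁, ∀ t ∈ ⋃₀ C₂, δ ≤ dist s t := by
  obtain ⟨δ, hδ, hθδ⟩ := Metric.uniformContinuousOn_iff.mp
    (isCompact_Icc.uniformContinuousOn_of_continuous hθ.continuousOn) π pi_pos
  refine ⟨δ, hδ, fun C₁ C₂ hC₁ hC₂ hne s ⟨M, hM, hs⟩ t ⟨M', hM', ht⟩ => ?_⟩
  have h₁ := hC₁.isNullElement_of_mem hM
  have h₂ := hC₂.isNullElement_of_mem hM'
  have hnc := hθ.not_congenerous_of_ne hC₁ hC₂ hne hM hM'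
  rw [hθ.congenerous_iff h₁ h₂ hs ht] at hnc
  simp only [MapsTo, not_forall] at hnc
  obtain ⟨u, hu, hθu⟩ := hnc
  by_contra! hst
  have hus : dist u s < δ := by
    rw [Real.dist_eq] at hst ⊢
    exact (abs_sub_left_of_mem_uIcc hu).trans_lt (by rwa [abs_sub_comm])
  exact hθu (hθδ u (uIcc_subset_Icc (h₁.subset_Icc hs) (h₂.subset_Icc ht) hu) s
    (h₁.subset_Icc hs) hus)

lemma lt_of_congenerous (hθ : IsPhase f y φ a b α θ) (h₁ : IsNullElement φ a b N₁)
    (h₂ : IsNullElement φ a b N₂) (hnc : ¬ Congenerous f y φ a b N₁ N₂) (hs : s ∈ N₁)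
    (ht : t ∈ N₂) (hst : s < t) (hM : Congenerous f y φ a b N₁ M)
    (hM' : Congenerous f y φ a b N₂ M') {u v : ℝ} (hu : u ∈ M) (hv : v ∈ M') : u < v := by
  have hsu := (hθ.congenerous_iff h₁ hM.2.1 hs hu).mp hM
  have htv := (hθ.congenerous_iff h₂ hM'.2.1 ht hv).mp hM'
  by_contra! hvu
  -- `[s, u]` and `[v, t]` then cover `[s, t]`, and `θ` stays within `π` of `θ s` on both
  have hs₀ := h₁.subset_zeroSet hs
  have ht₀ := h₂.subset_zeroSet ht
  have hu₀ := hM.2.1.subset_zeroSet hu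
  have hθu : θ u = θ s := hθ.eq_of_dist_lt hs₀ hu₀ (hsu right_mem_uIcc)
  have hθt : θ t = θ s := by
    rcases le_or_gt t u with htu | hut
    · exact hθ.eq_of_dist_lt hs₀ ht₀ (hsu (mem_uIcc_of_le hst.le htu))
    · rw [← hθu]
      exact (hθ.eq_of_dist_lt ht₀ hu₀ (htv (mem_uIcc_of_ge hvu hut.le))).symm
  refine hnc ((hθ.congenerous_iff h₁ h₂ hs ht).mpr fun w hw => ?_)
  rw [uIcc_of_le hst.le] at hw
  rcases le_or_gt w u with hwu | huw
  · exact hsu (mem_uIcc_of_le hw.1 hwu)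
  · rw [← hθt]
    exact htv (mem_uIcc_of_ge (hvu.trans huw.le) hw.2)

lemma setLT_sUnion_of_lt (hθ : IsPhase f y φ a b α θ) (hC₁ : IsNullClass f y φ a b C₁)
    (hC₂ : IsNullClass f y φ a b C₂) (hne : C₁ ≠ C₂) (hs : s ∈ ⋃₀ C₁) (ht : t ∈ ⋃₀ C₂)
    (hst : s < t) : SetLT (⋃₀ C₁) (⋃₀ C₂) := by
  obtain ⟨N₁, hN₁, hs⟩ := hs
  obtain ⟨N₂, hN₂, ht⟩ := ht
  rintro u ⟨M, hM, hu⟩ v ⟨M', hM', hv⟩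
  rw [hθ.eq_setOf_congenerous hC₁ hN₁] at hM
  rw [hθ.eq_setOf_congenerous hC₂ hN₂] at hM'
  exact hθ.lt_of_congenerous (hC₁.isNullElement_of_mem hN₁) (hC₂.isNullElement_of_mem hN₂)
    (hθ.not_congenerous_of_ne hC₁ hC₂ hne hN₁ hN₂) hs ht hst hM hM' hu hv

theorem setLT_or_setLT (hθ : IsPhase f y φ a b α θ) (hC₁ : IsNullClass f y φ a b C₁)
    (hC₂ : IsNullClass f y φ a b C₂) (hne : C₁ ≠ C₂) :
    SetLT (⋃₀ C₁) (⋃₀ C₂) ∨ SetLT (⋃₀ C₂) (⋃₀ C₁) := by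
  obtain ⟨δ, hδ, hsep⟩ := hθ.exists_pos_le_dist
  obtain ⟨s, hs⟩ := hθ.nonempty_sUnion hC₁
  obtain ⟨t, ht⟩ := hθ.nonempty_sUnion hC₂
  rcases lt_or_gt_of_ne (dist_pos.mp (hδ.trans_le (hsep hC₁ hC₂ hne s hs t ht))) with h | h
  · exact Or.inl (hθ.setLT_sUnion_of_lt hC₁ hC₂ hne hs ht h)
  · exact Or.inr (hθ.setLT_sUnion_of_lt hC₂ hC₁ hne.symm ht hs h)

theorem finite_setOf_isNullClass (hθ : IsPhase f y φ a b α θ) :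
    {C | IsNullClass f y φ a b C}.Finite := by
  obtain ⟨δ, hδ, hsep⟩ := hθ.exists_pos_le_dist
  choose! p hp using fun C (hC : IsNullClass f y φ a b C) => hθ.nonempty_sUnion hC
  have hsepp : ∀ C₁ ∈ {C | IsNullClass f y φ a b C}, ∀ C₂ ∈ {C | IsNullClass f y φ a b C},
      C₁ ≠ C₂ → δ ≤ dist (p C₁) (p C₂) :=
    fun C₁ hC₁ C₂ hC₂ hne => hsep hC₁ hC₂ hne _ (hp C₁ hC₁) _ (hp C₂ hC₂)
  refine Finite.of_finite_image (f := p)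
    (Finite.of_subset_Icc_of_pairwise_le_dist (a := a) (b := b) ?_ hδ ?_) ?_
  · rintro _ ⟨C, hC, rfl⟩
    obtain ⟨M, hM, hpM⟩ := hp C hC
    exact (hC.isNullElement_of_mem hM).subset_Icc hpM
  · rintro _ ⟨C₁, hC₁, rfl⟩ _ ⟨C₂, hC₂, rfl⟩ hne
    exact hsepp C₁ hC₁ C₂ hC₂ fun h => hne (h ▸ rfl)
  · intro C₁ hC₁ C₂ hC₂ heq
    by_contra hne
    have := hsepp C₁ hC₁ C₂ hC₂ hne
    rw [heq, dist_self] at this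
    exact hδ.not_ge this

end IsPhase

section

open Complex

lemma hasDerivAt_ofReal_sub_mul_ofReal {φ ψ : ℝ → ℝ} {z : ℝ → ℂ} {f g t : ℝ}
    (hφ : HasDerivAt φ (f * ψ t) t) (hψ : HasDerivAt ψ (-(g * φ t)) t)
    (hz : HasDerivAt z (-((f : ℂ) * z t ^ 2 + (g : ℂ))) t) :
    HasDerivAt (fun s => (ψ s : ℂ) - z s * φ s) (-(f * z t) * (ψ t - z t * φ t)) t := by
  refine (hψ.ofReal_comp.sub (hz.mul hφ.ofReal_comp)).congr_deriv ?_
  push_cast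
  ring

lemma eq_mul_cexp_sub_of_hasDerivAt {χ E F : ℝ → ℂ} {a b : ℝ}
    (hE : ∀ t ∈ Icc a b, HasDerivAt E (F t) t) (hχ : ∀ t ∈ Icc a b, HasDerivAt χ (-F t * χ t) t) :
    ∀ t ∈ Icc a b, χ t = χ a * exp (E a - E t) := by
  have hW : ∀ t ∈ Icc a b, HasDerivAt (fun s => χ s * exp (E s)) 0 t := fun t ht => by
    refine ((hχ t ht).mul (hE t ht).cexp).congr_deriv ?_
    ring
  intro t ht
  have := constant_of_has_deriv_right_zero
    (fun s hs => (hW s hs).continuousAt.continuousWithinAt)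
    (fun s hs => (hW s (Ico_subset_Icc_self hs)).hasDerivWithinAt) t ht
  rw [sub_eq_add_neg, Complex.exp_add, ← mul_assoc, ← this, mul_assoc, ← Complex.exp_add,
    add_neg_cancel, Complex.exp_zero, mul_one]

lemma im_mul_cexp_neg (w E : ℂ) :
    (w * exp (-E)).im = ‖w‖ * Real.exp (-E.re) * Real.sin (arg w - E.im) := by
  conv_lhs => rw [← norm_mul_exp_arg_mul_I w, mul_assoc, ← Complex.exp_add, im_ofReal_mul, exp_im]
  simp [mul_assoc, sub_eq_add_neg]

lemma sin_im_sub_arg_eq_zero {w E : ℂ} (hw : w ≠ 0) (h : (w * exp (-E)).im = 0) :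
    Real.sin (E.im - arg w) = 0 := by
  rw [im_mul_cexp_neg] at h
  simp only [mul_eq_zero, norm_eq_zero, hw, Real.exp_ne_zero, or_self, false_or] at h
  rw [← neg_sub, Real.sin_neg, h, neg_zero]

lemma eq_zero_of_ofReal_sub_mul_ofReal_eq_zero {p q : ℝ} {z : ℂ} (hz : z.im ≠ 0)
    (h : (q : ℂ) - z * p = 0) : p = 0 ∧ q = 0 := by
  have hp : p = 0 := by
    have := congrArg im h
    simp only [sub_im, ofReal_im, mul_im, ofReal_re, zero_sub, mul_zero, zero_add, zero_im,
      neg_eq_zero, mul_eq_zero] at this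
    exact this.resolve_left hz
  refine ⟨hp, ?_⟩
  simpa [hp] using h

end

lemma exists_isPhase {a b : ℝ} (hab : a ≤ b) {f g φ ψ : ℝ → ℝ} {z : ℝ → ℂ}
    (hf : ContinuousOn f (Icc a b))
    (hφ : ∀ t ∈ Icc a b, HasDerivAt φ (f t * ψ t) t)
    (hψ : ∀ t ∈ Icc a b, HasDerivAt ψ (-(g t * φ t)) t)
    (hnt : ∃ t ∈ Icc a b, φ t ≠ 0 ∨ ψ t ≠ 0)
    (hz : ∀ t ∈ Icc a b, HasDerivAt z (-((f t : ℂ) * z t ^ 2 + (g t : ℂ))) t)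
    (hzim : ∀ t ∈ Icc a b, 0 < (z t).im) :
    ∃ α θ, IsPhase f (fun t => (z t).im) φ a b α θ := by
  have hproj : ∀ t ∈ Icc a b, (projIcc a b hab t : ℝ) = t :=
    fun t ht => congrArg Subtype.val (projIcc_of_mem hab ht)
  -- `f z` extended continuously beyond `[a, b]`, so that its primitive is differentiable
  set F : ℝ → ℂ := fun t => f (projIcc a b hab t) * z (projIcc a b hab t)
  have hFc : Continuous F :=
    ((Complex.continuous_ofReal.comp_continuousOn hf).mul
      fun t ht => (hz t ht).continuousAt.continuousWithinAt).comp_continuous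
      (continuous_subtype_val.comp continuous_projIcc) fun t => (projIcc a b hab t).2
  set E : ℝ → ℂ := fun t => ∫ τ in a..t, F τ
  have hE' : ∀ t, HasDerivAt E (F t) t := fun t => (hFc.integral_hasStrictDerivAt a t).hasDerivAt
  set χ : ℝ → ℂ := fun t => (ψ t : ℂ) - z t * φ t
  have hχE : ∀ t ∈ Icc a b, χ t = χ a * Complex.exp (-E t) := by
    intro t ht
    simpa [E] using eq_mul_cexp_sub_of_hasDerivAt (fun t _ => hE' t) (fun t ht => by
      simpa [F, hproj t ht] using hasDerivAt_ofReal_sub_mul_ofReal (hφ t ht) (hψ t ht) (hz t ht))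
      t ht
  have hχa : χ a ≠ 0 := by
    obtain ⟨t, ht, hφψ⟩ := hnt
    intro h0
    have := eq_zero_of_ofReal_sub_mul_ofReal_eq_zero (hzim t ht).ne'
      (show χ t = 0 by rw [hχE t ht, h0, zero_mul])
    tauto
  refine ⟨Complex.arg (χ a), fun t => (E t).im, ⟨?_, fun s hs t ht => ?_, ?_⟩⟩
  · exact (Complex.continuous_im.comp (continuous_iff_continuousAt.2 fun t =>
      (hE' t).continuousAt)).continuousOn
  · have hst : uIcc s t ⊆ Icc a b := uIcc_subset_Icc hs ht
    calc ∫ τ in s..t, f τ * (z τ).im = ∫ τ in s..t, (F τ).im :=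
          integral_congr fun τ hτ => by simp [F, hproj τ (hst hτ)]
      _ = (∫ τ in s..t, F τ).im := intervalIntegral_im (hFc.intervalIntegrable s t)
      _ = (E t - E s).im := by
          rw [integral_interval_sub_left (hFc.intervalIntegrable a t) (hFc.intervalIntegrable a s)]
      _ = (E t).im - (E s).im := Complex.sub_im _ _
  · rintro t ⟨ht, hφt⟩
    refine sin_im_sub_arg_eq_zero hχa ?_
    rw [← hχE t ht]
    simp [χ, hφt]

theorem null_classes_finite_and_ordered_general
    (a b : ℝ) (hab : a < b) (f₁ g₁ : ℝ → ℝ)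
    (hf : ContinuousOn f₁ (Set.Icc a b))
    (φ ψ : ℝ → ℝ)
    (hφ : ∀ t ∈ Set.Icc a b, HasDerivAt φ (f₁ t * ψ t) t)
    (hψ : ∀ t ∈ Set.Icc a b, HasDerivAt ψ (-(g₁ t * φ t)) t)
    (hnt : ∃ t ∈ Set.Icc a b, φ t ≠ 0 ∨ ψ t ≠ 0)
    (z : ℝ → ℂ)
    (hz : ∀ t ∈ Set.Icc a b, HasDerivAt z (-((f₁ t : ℂ) * z t ^ 2 + (g₁ t : ℂ))) t)
    (hzim : ∀ t ∈ Set.Icc a b, 0 < (z t).im) :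
    {C : Set (Set ℝ) | IsNullClass f₁ (fun t => (z t).im) φ a b C}.Finite ∧
    ∀ C₁ C₂ : Set (Set ℝ),
      IsNullClass f₁ (fun t => (z t).im) φ a b C₁ →
      IsNullClass f₁ (fun t => (z t).im) φ a b C₂ →
      C₁ ≠ C₂ → SetLT (⋃₀ C₁) (⋃₀ C₂) ∨ SetLT (⋃₀ C₂) (⋃₀ C₁) := by
  obtain ⟨α, θ, hθ⟩ := exists_isPhase hab.le hf hφ hψ hnt hz hzim
  exact ⟨hθ.finite_setOf_isNullClass, fun _ _ => hθ.setLT_or_setLT⟩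

/-- For any nontrivial solution `(φ,ψ)` of `φ' = f₁ ψ, ψ' = -g₁ φ`, the function `φ` has
only finitely many null-classes on `[a,b]`, and these null-classes are linearly ordered
by `≺`.  Here `y = Im z > 0` where `z` solves `z' + f₁ z² + g₁ = 0`, `z(a) = i`. -/
theorem null_classes_finite_and_ordered
    (a b : ℝ) (hab : a < b) (f₁ g₁ : ℝ → ℝ)
    (hf : ContinuousOn f₁ (Set.Icc a b)) (hg : ContinuousOn g₁ (Set.Icc a b))
    (φ ψ : ℝ → ℝ)
    (hφ : ∀ t ∈ Set.Icc a b, HasDerivAt φ (f₁ t * ψ t) t)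
    (hψ : ∀ t ∈ Set.Icc a b, HasDerivAt ψ (-(g₁ t * φ t)) t)
    (hnt : ∃ t ∈ Set.Icc a b, φ t ≠ 0 ∨ ψ t ≠ 0)
    (z : ℝ → ℂ)
    (hz : ∀ t ∈ Set.Icc a b, HasDerivAt z (-((f₁ t : ℂ) * z t ^ 2 + (g₁ t : ℂ))) t)
    (hza : z a = Complex.I)
    (hzim : ∀ t ∈ Set.Icc a b, 0 < (z t).im) :
    {C : Set (Set ℝ) | IsNullClass f₁ (fun t => (z t).im) φ a b C}.Finite ∧
    ∀ C₁ C₂ : Set (Set ℝ),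
      IsNullClass f₁ (fun t => (z t).im) φ a b C₁ →
      IsNullClass f₁ (fun t => (z t).im) φ a b C₂ →
      C₁ ≠ C₂ → SetLT (⋃₀ C₁) (⋃₀ C₂) ∨ SetLT (⋃₀ C₂) (⋃₀ C₁) :=
  null_classes_finite_and_ordered_general a b hab f₁ g₁ hf φ ψ hφ hψ hnt z hz hzim
end

section
/- The congeniality relation on null-elements of the first component φ of a nontrivial solution of the system φ' = f₁(t)ψ, ψ' = -g₁(t)φ is an equivalence relation: it is reflexive, symmetric, and transitive on the set of null-elements of φ. -/
open Set intervalIntegral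

/-!
With `w = φ z - ψ`, the system and the Riccati equation give `w' = -f₁ z w`, so
`w · exp ∫ f₁ z` is constant. At a zero of `φ`, `w = -ψ` is real, and it is nonzero because the
solution is nontrivial and `Im z > 0`; hence `∫ f₁ (Im z)` between two zeros of `φ` is a multiple
of `π`. Such an integral vanishes between points of one null-element (a connected set mapped
continuously into the discrete set `πℤ`) and between points of congenerous null-elements (it is
smaller than `π` in modulus), and additivity of the integral yields the three laws.
-/

theorem mem_zmultiples_pi_of_exp_im_eq_zero {u : ℂ} (h : (Complex.exp u).im = 0) :
    u.im ∈ AddSubgroup.zmultiples Real.pi := by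
  rw [Complex.exp_im, mul_eq_zero] at h
  obtain ⟨n, hn⟩ := Real.sin_eq_zero_iff.1 (h.resolve_left (Real.exp_pos _).ne')
  exact AddSubgroup.mem_zmultiples_iff.2 ⟨n, by rw [zsmul_eq_mul, hn]⟩

theorem eq_zero_of_mem_zmultiples_of_abs_lt {p x : ℝ} (hx : x ∈ AddSubgroup.zmultiples p)
    (hlt : |x| < |p|) : x = 0 := by
  obtain ⟨n, rfl⟩ := AddSubgroup.mem_zmultiples_iff.1 hx
  rw [zsmul_eq_mul, abs_mul] at hlt
  have hn : |(n : ℝ)| < 1 := lt_of_mul_lt_mul_right (by linarith) (abs_nonneg p)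
  rw [← Int.cast_abs, ← Int.cast_one, Int.cast_lt, Int.abs_lt_one_iff] at hn
  simp [hn]

theorem ContinuousOn.hasDerivWithinAt_integral_Icc {E : Type*} [NormedAddCommGroup E]
    [NormedSpace ℝ E] [CompleteSpace E] {h : ℝ → E} {a b x : ℝ} (hh : ContinuousOn h (Icc a b))
    (hx : x ∈ Icc a b) :
    HasDerivWithinAt (fun t => ∫ τ in a..t, h τ) (h x) (Icc a b) x := by
  have : Fact (x ∈ Icc a b) := ⟨hx⟩
  exact integral_hasDerivWithinAt_right
    (hh.mono (uIcc_subset_Icc (left_mem_Icc.2 (hx.1.trans hx.2)) hx)).intervalIntegrable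
    (hh.stronglyMeasurableAtFilter_nhdsWithin measurableSet_Icc x) (hh x hx)

theorem mul_exp_primitive_eq_of_hasDerivAt {w h : ℝ → ℂ} {a b : ℝ}
    (hh : ContinuousOn h (Icc a b)) (hw : ∀ t ∈ Icc a b, HasDerivAt w (-(h t * w t)) t) :
    ∀ t ∈ Icc a b, w t * Complex.exp (∫ τ in a..t, h τ) = w a := by
  have hwc : ContinuousOn w (Icc a b) := fun t ht => (hw t ht).continuousAt.continuousWithinAt
  have hPc : ContinuousOn (fun t => ∫ τ in a..t, h τ) (Icc a b) := fun t ht =>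
    (hh.hasDerivWithinAt_integral_Icc ht).continuousWithinAt
  have hderiv : ∀ t ∈ Ico a b,
      HasDerivWithinAt (fun t => w t * Complex.exp (∫ τ in a..t, h τ)) 0 (Ici t) t := by
    intro t ht
    have hprod := (hw t (Ico_subset_Icc_self ht)).hasDerivWithinAt.mul
      (hh.hasDerivWithinAt_integral_Icc (Ico_subset_Icc_self ht)).cexp
    exact (hprod.mono_of_mem_nhdsWithin (Icc_mem_nhdsGE_of_mem ht)).congr_deriv (by ring)
  intro t ht
  simpa using constant_of_has_deriv_right_zero
    (hwc.mul (Complex.continuous_exp.comp_continuousOn hPc)) hderiv t ht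

theorem mul_exp_integral_eq_of_hasDerivAt {w h : ℝ → ℂ} {a b s t : ℝ}
    (hh : ContinuousOn h (Icc a b)) (hw : ∀ t ∈ Icc a b, HasDerivAt w (-(h t * w t)) t)
    (hs : s ∈ Icc a b) (ht : t ∈ Icc a b) :
    w t * Complex.exp (∫ τ in s..t, h τ) = w s := by
  have hint : ∀ u ∈ Icc a b, IntervalIntegrable h MeasureTheory.volume a u := fun u hu =>
    (hh.mono (uIcc_subset_Icc (left_mem_Icc.2 (hu.1.trans hu.2)) hu)).intervalIntegrable
  have hG := mul_exp_primitive_eq_of_hasDerivAt hh hw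
  rw [← integral_interval_sub_left (hint t ht) (hint s hs), Complex.exp_sub, ← mul_div_assoc,
    hG t ht, ← hG s hs, mul_div_cancel_right₀ _ (Complex.exp_ne_zero _)]

section Riccati

variable {f₁ g₁ φ ψ : ℝ → ℝ} {z : ℝ → ℂ}

theorem hasDerivAt_mul_sub_of_riccati {t : ℝ} (hφ : HasDerivAt φ (f₁ t * ψ t) t)
    (hψ : HasDerivAt ψ (-(g₁ t * φ t)) t)
    (hz : HasDerivAt z (-((f₁ t : ℂ) * z t ^ 2 + (g₁ t : ℂ))) t) :
    HasDerivAt (fun s => (φ s : ℂ) * z s - ψ s)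
      (-((f₁ t : ℂ) * z t * ((φ t : ℂ) * z t - ψ t))) t :=
  ((hφ.ofReal_comp.mul hz).sub hψ.ofReal_comp).congr_deriv (by push_cast; ring)

theorem eq_zero_and_eq_zero_of_mul_sub_eq_zero {t : ℝ} (hzt : 0 < (z t).im)
    (h : (φ t : ℂ) * z t - ψ t = 0) : φ t = 0 ∧ ψ t = 0 := by
  have hφt : φ t = 0 := by
    simpa [hzt.ne'] using congrArg Complex.im h
  exact ⟨hφt, by simpa [hφt] using h⟩

variable {a b : ℝ}

theorem integral_mul_im_mem_zmultiples_pi (hf : ContinuousOn f₁ (Icc a b))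
    (hφ : ∀ t ∈ Icc a b, HasDerivAt φ (f₁ t * ψ t) t)
    (hψ : ∀ t ∈ Icc a b, HasDerivAt ψ (-(g₁ t * φ t)) t)
    (hnt : ∃ t ∈ Icc a b, φ t ≠ 0 ∨ ψ t ≠ 0)
    (hz : ∀ t ∈ Icc a b, HasDerivAt z (-((f₁ t : ℂ) * z t ^ 2 + (g₁ t : ℂ))) t)
    (hzim : ∀ t ∈ Icc a b, 0 < (z t).im) :
    ∀ s ∈ ZeroSet φ a b, ∀ s' ∈ ZeroSet φ a b,
      ∫ τ in s..s', f₁ τ * (z τ).im ∈ AddSubgroup.zmultiples Real.pi := by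
  intro s hs s' hs'
  have hfz : ContinuousOn (fun t => (f₁ t : ℂ) * z t) (Icc a b) :=
    (Complex.continuous_ofReal.comp_continuousOn hf).mul
      fun t ht => (hz t ht).continuousAt.continuousWithinAt
  have hcons : ∀ {u v}, u ∈ Icc a b → v ∈ Icc a b →
      ((φ v : ℂ) * z v - ψ v) * Complex.exp (∫ τ in u..v, (f₁ τ : ℂ) * z τ) = φ u * z u - ψ u :=
    fun hu hv => mul_exp_integral_eq_of_hasDerivAt hfz
      (fun t ht => hasDerivAt_mul_sub_of_riccati (hφ t ht) (hψ t ht) (hz t ht)) hu hv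
  have hψs' : ψ s' ≠ 0 := by
    intro hψ0
    obtain ⟨t, ht, hne⟩ := hnt
    have hwt := hcons hs'.1 ht
    simp only [hs'.2, hψ0, Complex.ofReal_zero, zero_mul, sub_zero, mul_eq_zero,
      Complex.exp_ne_zero, or_false] at hwt
    obtain ⟨hφt, hψt⟩ := eq_zero_and_eq_zero_of_mul_sub_eq_zero (hzim t ht) hwt
    exact hne.elim (· hφt) (· hψt)
  have hexp : (Complex.exp (∫ τ in s..s', (f₁ τ : ℂ) * z τ)).im = 0 := by
    simpa [hs.2, hs'.2, Complex.mul_im, hψs'] using congrArg Complex.im (hcons hs.1 hs'.1)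
  have him : (∫ τ in s..s', (f₁ τ : ℂ) * z τ).im = ∫ τ in s..s', f₁ τ * (z τ).im := by
    simpa using
      (intervalIntegral_im (hfz.mono (uIcc_subset_Icc hs.1 hs'.1)).intervalIntegrable).symm
  exact him ▸ mem_zmultiples_pi_of_exp_im_eq_zero hexp

end Riccati

section Congenerous

variable {f y φ : ℝ → ℝ} {a b : ℝ} {N N₁ N₂ N₃ : Set ℝ}

theorem IsNullElement.subset_zeroSet_s13 (hN : IsNullElement φ a b N) : N ⊆ ZeroSet φ a b := by
  obtain ⟨t, -, rfl⟩ := hN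
  exact connectedComponentIn_subset _ _

theorem IsNullElement.subset_Icc_s13 (hN : IsNullElement φ a b N) : N ⊆ Icc a b :=
  hN.subset_zeroSet_s13.trans fun _ ht => ht.1

theorem IsNullElement.isPreconnected (hN : IsNullElement φ a b N) : IsPreconnected N := by
  obtain ⟨t, -, rfl⟩ := hN
  exact isPreconnected_connectedComponentIn

theorem IsNullElement.nonempty_s13 (hN : IsNullElement φ a b N) : N.Nonempty := by
  obtain ⟨t, ht, rfl⟩ := hN
  exact ⟨t, mem_connectedComponentIn ht⟩

theorem integral_eq_zero_of_mem_isNullElement (hF : ContinuousOn (fun t => f t * y t) (Icc a b))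
    (hZ : ∀ s ∈ ZeroSet φ a b, ∀ s' ∈ ZeroSet φ a b,
      ∫ τ in s..s', f τ * y τ ∈ AddSubgroup.zmultiples Real.pi)
    (hN : IsNullElement φ a b N) {s s' : ℝ} (hs : s ∈ N) (hs' : s' ∈ N) :
    ∫ τ in s..s', f τ * y τ = 0 := by
  have hsI := hN.subset_Icc_s13 hs
  have hcont : ContinuousOn (fun t => ∫ τ in s..t, f τ * y τ) N :=
    (continuousOn_primitive_interval' (hF.intervalIntegrable_of_Icc (hsI.1.trans hsI.2))
      (Icc_subset_uIcc hsI)).mono (hN.subset_Icc_s13.trans Icc_subset_uIcc)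
  have hmaps : MapsTo (fun t => ∫ τ in s..t, f τ * y τ) N (AddSubgroup.zmultiples Real.pi) :=
    fun t ht => hZ s (hN.subset_zeroSet_s13 hs) t (hN.subset_zeroSet_s13 ht)
  exact (hN.isPreconnected.constant_of_mapsTo (isDiscrete_iff_discreteTopology.2
    (inferInstanceAs (DiscreteTopology (AddSubgroup.zmultiples Real.pi))))
    hcont hmaps hs' hs).trans integral_same

theorem integral_eq_zero_of_congenerous
    (hZ : ∀ s ∈ ZeroSet φ a b, ∀ s' ∈ ZeroSet φ a b,
      ∫ τ in s..s', f τ * y τ ∈ AddSubgroup.zmultiples Real.pi)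
    (h : Congenerous f y φ a b N₁ N₂) {t₁ t₂ : ℝ} (ht₁ : t₁ ∈ N₁) (ht₂ : t₂ ∈ N₂) :
    ∫ τ in t₁..t₂, f τ * y τ = 0 :=
  eq_zero_of_mem_zmultiples_of_abs_lt (hZ t₁ (h.1.subset_zeroSet_s13 ht₁) t₂ (h.2.1.subset_zeroSet_s13 ht₂))
    ((abs_of_pos Real.pi_pos).symm ▸ h.2.2 t₁ ht₁ t₂ ht₂ t₂ right_mem_uIcc)

theorem congenerous_refl (hF : ContinuousOn (fun t => f t * y t) (Icc a b))
    (hZ : ∀ s ∈ ZeroSet φ a b, ∀ s' ∈ ZeroSet φ a b,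
      ∫ τ in s..s', f τ * y τ ∈ AddSubgroup.zmultiples Real.pi)
    (hN : IsNullElement φ a b N) : Congenerous f y φ a b N N := by
  refine ⟨hN, hN, fun t₁ ht₁ t₂ ht₂ t ht => ?_⟩
  have htN : t ∈ N := hN.isPreconnected.ordConnected.uIcc_subset ht₁ ht₂ ht
  rw [integral_eq_zero_of_mem_isNullElement hF hZ hN ht₁ htN, abs_zero]
  exact Real.pi_pos

theorem Congenerous.symm (hF : ContinuousOn (fun t => f t * y t) (Icc a b))
    (hZ : ∀ s ∈ ZeroSet φ a b, ∀ s' ∈ ZeroSet φ a b,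
      ∫ τ in s..s', f τ * y τ ∈ AddSubgroup.zmultiples Real.pi)
    (h : Congenerous f y φ a b N₁ N₂) : Congenerous f y φ a b N₂ N₁ := by
  refine ⟨h.2.1, h.1, fun t₂ ht₂ t₁ ht₁ t ht => ?_⟩
  rw [uIcc_comm] at ht
  have hI := uIcc_subset_Icc (h.1.subset_Icc_s13 ht₁) (h.2.1.subset_Icc_s13 ht₂)
  rw [← integral_interval_sub_left
    (hF.mono (hI.trans' (uIcc_subset_uIcc_left ht))).intervalIntegrable
    (hF.mono hI).intervalIntegrable, integral_eq_zero_of_congenerous hZ h ht₁ ht₂, sub_zero]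
  exact h.2.2 t₁ ht₁ t₂ ht₂ t ht

theorem Congenerous.trans (hF : ContinuousOn (fun t => f t * y t) (Icc a b))
    (hZ : ∀ s ∈ ZeroSet φ a b, ∀ s' ∈ ZeroSet φ a b,
      ∫ τ in s..s', f τ * y τ ∈ AddSubgroup.zmultiples Real.pi)
    (h₁₂ : Congenerous f y φ a b N₁ N₂) (h₂₃ : Congenerous f y φ a b N₂ N₃) :
    Congenerous f y φ a b N₁ N₃ := by
  refine ⟨h₁₂.1, h₂₃.2.1, fun t₁ ht₁ t₃ ht₃ t ht => ?_⟩
  obtain ⟨t₂, ht₂⟩ := h₁₂.2.1.nonempty_s13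
  rcases uIcc_subset_uIcc_union_uIcc ht with ht | ht
  · exact h₁₂.2.2 t₁ ht₁ t₂ ht₂ t ht
  · have hI₁₂ := uIcc_subset_Icc (h₁₂.1.subset_Icc_s13 ht₁) (h₁₂.2.1.subset_Icc_s13 ht₂)
    have hI₂₃ := uIcc_subset_Icc (h₂₃.1.subset_Icc_s13 ht₂) (h₂₃.2.1.subset_Icc_s13 ht₃)
    rw [← integral_add_adjacent_intervals (hF.mono hI₁₂).intervalIntegrable
      (hF.mono (hI₂₃.trans' (uIcc_subset_uIcc_left ht))).intervalIntegrable,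
      integral_eq_zero_of_congenerous hZ h₁₂ ht₁ ht₂, zero_add]
    exact h₂₃.2.2 t₂ ht₂ t₃ ht₃ t ht

end Congenerous

theorem congenerous_equivalence_general
    (a b : ℝ) (f₁ g₁ : ℝ → ℝ)
    (hf : ContinuousOn f₁ (Set.Icc a b))
    (φ ψ : ℝ → ℝ)
    (hφ : ∀ t ∈ Set.Icc a b, HasDerivAt φ (f₁ t * ψ t) t)
    (hψ : ∀ t ∈ Set.Icc a b, HasDerivAt ψ (-(g₁ t * φ t)) t)
    (hnt : ∃ t ∈ Set.Icc a b, φ t ≠ 0 ∨ ψ t ≠ 0)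
    (z : ℝ → ℂ)
    (hz : ∀ t ∈ Set.Icc a b, HasDerivAt z (-((f₁ t : ℂ) * z t ^ 2 + (g₁ t : ℂ))) t)
    (hzim : ∀ t ∈ Set.Icc a b, 0 < (z t).im) :
    (∀ N : Set ℝ, IsNullElement φ a b N →
      Congenerous f₁ (fun t => (z t).im) φ a b N N) ∧
    (∀ N₁ N₂ : Set ℝ, Congenerous f₁ (fun t => (z t).im) φ a b N₁ N₂ →
      Congenerous f₁ (fun t => (z t).im) φ a b N₂ N₁) ∧
    (∀ N₁ N₂ N₃ : Set ℝ, Congenerous f₁ (fun t => (z t).im) φ a b N₁ N₂ →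
      Congenerous f₁ (fun t => (z t).im) φ a b N₂ N₃ →
      Congenerous f₁ (fun t => (z t).im) φ a b N₁ N₃) := by
  have hF : ContinuousOn (fun t => f₁ t * (z t).im) (Icc a b) :=
    hf.mul (Complex.continuous_im.comp_continuousOn
      fun t ht => (hz t ht).continuousAt.continuousWithinAt)
  have hZ := integral_mul_im_mem_zmultiples_pi hf hφ hψ hnt hz hzim
  exact ⟨fun _ hN => congenerous_refl hF hZ hN, fun _ _ h => h.symm hF hZ,
    fun _ _ _ h₁₂ h₂₃ => h₁₂.trans hF hZ h₂₃⟩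

/-- The congeniality relation on null-elements of `φ` (for a nontrivial solution of
`φ' = f₁ ψ, ψ' = -g₁ φ`) is an equivalence relation: reflexive, symmetric and
transitive on the set of null-elements.  Here `y = Im z > 0` where `z` solves
`z' + f₁ z² + g₁ = 0`, `z(a) = i`. -/
theorem congenerous_equivalence
    (a b : ℝ) (hab : a < b) (f₁ g₁ : ℝ → ℝ)
    (hf : ContinuousOn f₁ (Set.Icc a b)) (hg : ContinuousOn g₁ (Set.Icc a b))
    (φ ψ : ℝ → ℝ)
    (hφ : ∀ t ∈ Set.Icc a b, HasDerivAt φ (f₁ t * ψ t) t)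
    (hψ : ∀ t ∈ Set.Icc a b, HasDerivAt ψ (-(g₁ t * φ t)) t)
    (hnt : ∃ t ∈ Set.Icc a b, φ t ≠ 0 ∨ ψ t ≠ 0)
    (z : ℝ → ℂ)
    (hz : ∀ t ∈ Set.Icc a b, HasDerivAt z (-((f₁ t : ℂ) * z t ^ 2 + (g₁ t : ℂ))) t)
    (hza : z a = Complex.I)
    (hzim : ∀ t ∈ Set.Icc a b, 0 < (z t).im) :
    (∀ N : Set ℝ, IsNullElement φ a b N →
      Congenerous f₁ (fun t => (z t).im) φ a b N N) ∧
    (∀ N₁ N₂ : Set ℝ, Congenerous f₁ (fun t => (z t).im) φ a b N₁ N₂ →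
      Congenerous f₁ (fun t => (z t).im) φ a b N₂ N₁) ∧
    (∀ N₁ N₂ N₃ : Set ℝ, Congenerous f₁ (fun t => (z t).im) φ a b N₁ N₂ →
      Congenerous f₁ (fun t => (z t).im) φ a b N₂ N₃ →
      Congenerous f₁ (fun t => (z t).im) φ a b N₁ N₃) :=
  congenerous_equivalence_general a b f₁ g₁ hf φ ψ hφ hψ hnt z hz hzim
end

section
/- Let f₁, f₂, g₁, g₂ be continuous on [a,b] with f₂(t) ≥ f₁(t) > 0 and g₂(t) ≥ g₁(t) for all t. Let (φ₁, ψ₁) solve φ' = f₁ψ, ψ' = -g₁φ with φ₁ having exactly n ≥ 1 zeros t₁ < ... < t_n in (t₀, t⁰]. Let (φ₂, ψ₂) solve φ' = f₂ψ, ψ' = -g₂φ with ψ₁(t₀)/φ₁(t₀) ≥ ψ₂(t₀)/φ₂(t₀) (interpreted as +∞ when the denominator vanishes). Then φ₂ has at least n zeros in (t₀, t_n]. -/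
/-!
Prüfer transformation: a nontrivial solution of `φ' = f ψ, ψ' = -g φ` can be written
`φ = r sin θ, ψ = r cos θ` with `r ≠ 0` and `θ' = f cos² θ + g sin² θ`, so the zeros of `φ` are
the times at which `θ` hits `π ℤ`. Since `f > 0`, `θ` crosses these levels only upwards: the `n`
zeros of `φ₁` in `(t₀, tₙ]` force `θ₁ (tₙ) ≥ n π`. The initial ratio condition says
`θ₁ (t₀) ≤ θ₂ (t₀)`, and because the right-hand side is Lipschitz in `θ` and increases from system 1
to system 2, a Grönwall-type comparison keeps `θ₁ ≤ θ₂`. Hence `θ₂` climbs from `[0, π)` to at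
least `n π` on `(t₀, tₙ]`, meeting each of `π, 2π, …, nπ`, and `φ₂` vanishes there.
-/

open Set Real
open scoped Topology

theorem eqOn_zero_of_abs_deriv_le_mul_abs {x x' : ℝ → ℝ} {s t K r : ℝ}
    (hd : ∀ u ∈ Icc s t, HasDerivAt x (x' u) u) (hb : ∀ u ∈ Icc s t, |x' u| ≤ K * |x u|)
    (hr : r ∈ Icc s t) (h0 : x r = 0) : EqOn x 0 (Icc s t) := by
  intro u hu
  rcases le_total r u with hru | hur
  · have hsub : Icc r t ⊆ Icc s t := Icc_subset_Icc_left hr.1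
    exact eq_zero_of_abs_deriv_le_mul_abs_self_of_eq_zero_right
      (fun v hv => (hd v (hsub hv)).continuousAt.continuousWithinAt)
      (fun v hv => (hd v (hsub (Ico_subset_Icc_self hv))).hasDerivWithinAt) h0
      (fun v hv => hb v (hsub (Ico_subset_Icc_self hv))) u ⟨hru, hu.2⟩
  · -- run time backwards: `v ↦ x (-v)` vanishes at `-r` and satisfies the same bound
    have hsub : ∀ v ∈ Icc (-r) (-s), -v ∈ Icc s t := fun v hv =>
      ⟨le_neg_of_le_neg hv.2, (neg_le.1 hv.1).trans hr.2⟩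
    have hd' : ∀ v ∈ Icc (-r) (-s), HasDerivAt (fun v => x (-v)) (-x' (-v)) v := fun v hv =>
      ((hd (-v) (hsub v hv)).comp v (hasDerivAt_neg v)).congr_deriv (mul_neg_one _)
    simpa using eq_zero_of_abs_deriv_le_mul_abs_self_of_eq_zero_right (f := fun v => x (-v))
      (fun v hv => (hd' v hv).continuousAt.continuousWithinAt)
      (fun v hv => (hd' v (Ico_subset_Icc_self hv)).hasDerivWithinAt) (by simpa using h0)
      (fun v hv => by simpa using hb (-v) (hsub v (Ico_subset_Icc_self hv))) (-u)
      ⟨neg_le_neg hur, neg_le_neg hu.1⟩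

theorem lt_of_hasDerivAt_pos_of_eq {θ G : ℝ → ℝ} {s T c : ℝ}
    (hd : ∀ u ∈ Icc s T, HasDerivAt θ (G u) u) (hpos : ∀ u ∈ Icc s T, θ u = c → 0 < G u)
    (hs : c ≤ θ s) : ∀ t ∈ Ioc s T, c < θ t := by
  have hle : ∀ t ∈ Icc s T, c ≤ θ t :=
    image_le_of_deriv_right_lt_deriv_boundary' continuousOn_const
      (fun _ _ => hasDerivWithinAt_const _ _ _) hs
      (fun u hu => (hd u hu).continuousAt.continuousWithinAt)
      (fun u hu => (hd u (Ico_subset_Icc_self hu)).hasDerivWithinAt)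
      (fun u hu h => hpos u (Ico_subset_Icc_self hu) h.symm)
  intro t ht
  have htI := Ioc_subset_Icc_self ht
  refine (hle t htI).lt_of_ne fun hct => (hpos t htI hct.symm).not_ge ?_
  -- `θ t = c` is a minimum of `θ` on `[s, t]`, so the left slopes at `t` are nonpositive
  refine le_of_tendsto (hasDerivAt_iff_tendsto_slope_left_right.1 (hd t htI)).1 ?_
  filter_upwards [Ioo_mem_nhdsLT ht.1] with z hz
  rw [slope_def_field, ← hct]
  exact div_nonpos_of_nonneg_of_nonpos (sub_nonneg.2 (hle z ⟨hz.1.le, hz.2.le.trans ht.2⟩))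
    (sub_nonpos.2 hz.2.le)

theorem le_of_hasDerivAt_of_sub_le_mul {θ₁ θ₂ G₁ G₂ : ℝ → ℝ} {s T L : ℝ}
    (hd₁ : ∀ u ∈ Icc s T, HasDerivAt θ₁ (G₁ u) u) (hd₂ : ∀ u ∈ Icc s T, HasDerivAt θ₂ (G₂ u) u)
    (hG : ∀ u ∈ Icc s T, θ₂ u < θ₁ u → G₁ u - G₂ u ≤ L * (θ₁ u - θ₂ u))
    (hs : θ₁ s ≤ θ₂ s) : ∀ t ∈ Icc s T, θ₁ t ≤ θ₂ t := by
  set e : ℝ → ℝ := fun u => exp ((L + 1) * (u - s))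
  have he : ∀ u, HasDerivAt e ((L + 1) * e u) u := fun u => by
    simpa [e, mul_comm] using ((hasDerivAt_id u).sub_const s).const_mul (L + 1) |>.exp
  -- fence `θ₁` below `θ₂ + δ e`, which grows faster than the gap allowed by `hG`
  have hfence : ∀ δ > 0, ∀ t ∈ Icc s T, θ₁ t ≤ θ₂ t + δ * e t := fun δ hδ =>
    image_le_of_deriv_right_lt_deriv_boundary'
      (fun u hu => (hd₁ u hu).continuousAt.continuousWithinAt)
      (fun u hu => (hd₁ u (Ico_subset_Icc_self hu)).hasDerivWithinAt)
      (by simpa [e] using hs.trans (le_add_of_nonneg_right hδ.le))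
      (fun u hu => ((hd₂ u hu).add ((he u).const_mul δ)).continuousAt.continuousWithinAt)
      (fun u hu => ((hd₂ u (Ico_subset_Icc_self hu)).add ((he u).const_mul δ)).hasDerivWithinAt)
      (fun u hu heq => by
        have hgap : θ₁ u - θ₂ u = δ * e u := by rw [heq]; ring
        have hpos : 0 < δ * e u := mul_pos hδ (exp_pos _)
        have := hG u (Ico_subset_Icc_self hu) (by linarith)
        rw [hgap] at this
        linarith)
  intro t ht
  refine le_of_forall_pos_le_add fun ε hε => ?_
  have he_pos : 0 < e t := exp_pos _
  simpa only [div_mul_cancel₀ ε he_pos.ne'] using hfence (ε / e t) (div_pos hε he_pos) t ht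

theorem ContinuousOn.exists_hasDerivAt_Icc {G : ℝ → ℝ} {a b : ℝ} (hab : a ≤ b)
    (hG : ContinuousOn G (Icc a b)) (x₀ c : ℝ) :
    ∃ θ : ℝ → ℝ, θ x₀ = c ∧ ∀ t ∈ Icc a b, HasDerivAt θ (G t) t := by
  set G' : ℝ → ℝ := IccExtend hab ((Icc a b).domRestrict G)
  have hG' : Continuous G' :=
    continuous_IccExtend_iff.2 (continuousOn_iff_continuous_domRestrict.1 hG)
  refine ⟨fun t => c + ∫ u in x₀..t, G' u, by simp, fun t ht => ?_⟩
  have := ((hG'.integral_hasStrictDerivAt x₀ t).hasDerivAt).const_add c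
  rwa [show G' t = G t from IccExtend_of_mem hab _ ht] at this

theorem exists_polar_of_mul_cos_eq_mul_sin {p q θ : ℝ} (hpq : 0 < p ^ 2 + q ^ 2)
    (h : p * cos θ = q * sin θ) : ∃ r ≠ 0, p = r * sin θ ∧ q = r * cos θ := by
  have hθ := sin_sq_add_cos_sq θ
  refine ⟨p * sin θ + q * cos θ, fun hr => ?_, ?_, ?_⟩
  · have hp : p = 0 := by linear_combination sin θ * hr + cos θ * h - p * hθ
    have hq : q = 0 := by linear_combination cos θ * hr - sin θ * h - q * hθ
    simp [hp, hq] at hpq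
  · linear_combination cos θ * h - p * hθ
  · linear_combination -sin θ * h - q * hθ

theorem abs_sin_sq_sub_sin_sq_le (x y : ℝ) : |sin x ^ 2 - sin y ^ 2| ≤ 2 * |x - y| := by
  rw [sq_sub_sq, abs_mul]
  refine mul_le_mul ((abs_add_le _ _).trans ?_) (abs_sin_sub_sin_le x y) (abs_nonneg _) zero_le_two
  linarith [abs_sin_le_one x, abs_sin_le_one y]

theorem mul_cos_sq_add_mul_sin_sq_sub_le {f₁ g₁ f₂ g₂ : ℝ} (hf : f₁ ≤ f₂) (hg : g₁ ≤ g₂)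
    (x y : ℝ) :
    f₁ * cos x ^ 2 + g₁ * sin x ^ 2 - (f₂ * cos y ^ 2 + g₂ * sin y ^ 2)
      ≤ 2 * |g₁ - f₁| * |x - y| := by
  have hmaj : (f₁ - f₂) * cos y ^ 2 + (g₁ - g₂) * sin y ^ 2 ≤ 0 := by
    nlinarith [sq_nonneg (cos y), sq_nonneg (sin y)]
  have hlip : (g₁ - f₁) * (sin x ^ 2 - sin y ^ 2) ≤ |g₁ - f₁| * (2 * |x - y|) := by
    refine (le_abs_self _).trans ?_
    rw [abs_mul]
    exact mul_le_mul_of_nonneg_left (abs_sin_sq_sub_sin_sq_le x y) (abs_nonneg _)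
  calc f₁ * cos x ^ 2 + g₁ * sin x ^ 2 - (f₂ * cos y ^ 2 + g₂ * sin y ^ 2)
      = (g₁ - f₁) * (sin x ^ 2 - sin y ^ 2)
          + ((f₁ - f₂) * cos y ^ 2 + (g₁ - g₂) * sin y ^ 2) := by
        linear_combination f₁ * sin_sq_add_cos_sq x - f₁ * sin_sq_add_cos_sq y
    _ ≤ 2 * |g₁ - f₁| * |x - y| := by linarith

theorem sin_succ_mul_pi (k : ℕ) : sin ((k + 1) * π) = 0 := by
  rw [← Nat.cast_succ]
  exact sin_nat_mul_pi _

theorem succ_mul_pi_le_of_sin_eq_zero {x : ℝ} {k : ℕ} (hx : sin x = 0) (hk : k * π < x) :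
    (k + 1) * π ≤ x := by
  obtain ⟨m, rfl⟩ := sin_eq_zero_iff.1 hx
  have hkm : (k : ℤ) < m := by exact_mod_cast (mul_lt_mul_iff_left₀ pi_pos).1 hk
  have : ((k : ℤ) + 1 : ℝ) ≤ m := by exact_mod_cast hkm
  exact mul_le_mul_of_nonneg_right (by exact_mod_cast this) pi_pos.le

/-- The angle in `[0, π)` with cotangent `q / p`, where `p = 0` is read as cotangent `+∞`. -/
noncomputable def cotAngle (p q : ℝ) : ℝ := if p = 0 then 0 else π / 2 - arctan (q / p)

theorem cotAngle_mem_Ico (p q : ℝ) : cotAngle p q ∈ Ico 0 π := by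
  unfold cotAngle
  split_ifs
  · exact ⟨le_rfl, pi_pos⟩
  · constructor <;> linarith [arctan_lt_pi_div_two (q / p), neg_pi_div_two_lt_arctan (q / p)]

theorem mul_cos_cotAngle (p q : ℝ) : p * cos (cotAngle p q) = q * sin (cotAngle p q) := by
  unfold cotAngle
  split_ifs with hp
  · simp [hp]
  · rw [cos_pi_div_two_sub, sin_pi_div_two_sub, sin_arctan, cos_arctan]
    field_simp

theorem cotAngle_le_cotAngle {p₁ q₁ p₂ q₂ : ℝ}
    (h : p₁ = 0 ∨ (p₁ ≠ 0 ∧ p₂ ≠ 0 ∧ q₁ / p₁ ≥ q₂ / p₂)) :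
    cotAngle p₁ q₁ ≤ cotAngle p₂ q₂ := by
  rcases h with hp₁ | ⟨hp₁, hp₂, hq⟩
  · rw [cotAngle, if_pos hp₁]
    exact (cotAngle_mem_Ico p₂ q₂).1
  · rw [cotAngle, cotAngle, if_neg hp₁, if_neg hp₂]
    linarith [arctan_strictMono.monotone hq]

theorem sq_add_sq_pos_of_exists_ne_zero {a b : ℝ} {f g φ ψ : ℝ → ℝ}
    (hf : ContinuousOn f (Icc a b)) (hg : ContinuousOn g (Icc a b))
    (hφ : ∀ t ∈ Icc a b, HasDerivAt φ (f t * ψ t) t)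
    (hψ : ∀ t ∈ Icc a b, HasDerivAt ψ (-(g t * φ t)) t)
    (hnt : ∃ t ∈ Icc a b, φ t ≠ 0 ∨ ψ t ≠ 0) :
    ∀ t ∈ Icc a b, 0 < φ t ^ 2 + ψ t ^ 2 := by
  obtain ⟨C, hC⟩ := isCompact_Icc.exists_bound_of_continuousOn (hf.sub hg)
  have hd : ∀ t ∈ Icc a b, HasDerivAt (fun t => φ t ^ 2 + ψ t ^ 2)
      ((f t - g t) * (2 * φ t * ψ t)) t := fun t ht =>
    (((hφ t ht).pow 2).add ((hψ t ht).pow 2)).congr_deriv (by ring)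
  have hb : ∀ t ∈ Icc a b, |(f t - g t) * (2 * φ t * ψ t)| ≤ C * |φ t ^ 2 + ψ t ^ 2| := by
    intro t ht
    have hfg : |f t - g t| ≤ C := hC t ht
    have hφψ : |2 * φ t * ψ t| ≤ |φ t ^ 2 + ψ t ^ 2| := by
      rw [abs_of_nonneg (a := φ t ^ 2 + ψ t ^ 2) (by positivity), abs_le]
      constructor <;> nlinarith [sq_nonneg (φ t + ψ t), sq_nonneg (φ t - ψ t)]
    rw [abs_mul]
    exact mul_le_mul hfg hφψ (abs_nonneg _) ((abs_nonneg _).trans hfg)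
  intro t ht
  refine (by positivity : 0 ≤ φ t ^ 2 + ψ t ^ 2).lt_of_ne fun h0 => ?_
  obtain ⟨r, hr, hne⟩ := hnt
  have hρr : φ r ^ 2 + ψ r ^ 2 = 0 := eqOn_zero_of_abs_deriv_le_mul_abs hd hb ht h0.symm hr
  obtain ⟨hφr, hψr⟩ := (add_eq_zero_iff_of_nonneg (sq_nonneg _) (sq_nonneg _)).1 hρr
  rcases hne with hne | hne
  · exact hne (pow_eq_zero_iff two_ne_zero |>.1 hφr)
  · exact hne (pow_eq_zero_iff two_ne_zero |>.1 hψr)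

theorem exists_prufer_angle {a b t₀ : ℝ} (ht₀ : t₀ ∈ Icc a b) {f g φ ψ : ℝ → ℝ}
    (hf : ContinuousOn f (Icc a b)) (hg : ContinuousOn g (Icc a b))
    (hφ : ∀ t ∈ Icc a b, HasDerivAt φ (f t * ψ t) t)
    (hψ : ∀ t ∈ Icc a b, HasDerivAt ψ (-(g t * φ t)) t)
    (hnt : ∃ t ∈ Icc a b, φ t ≠ 0 ∨ ψ t ≠ 0) {θ₀ : ℝ}
    (hθ₀ : φ t₀ * cos θ₀ = ψ t₀ * sin θ₀) :
    ∃ θ : ℝ → ℝ, θ t₀ = θ₀ ∧ ∀ t ∈ Icc a b,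
      HasDerivAt θ (f t * cos (θ t) ^ 2 + g t * sin (θ t) ^ 2) t ∧ (φ t = 0 ↔ sin (θ t) = 0) := by
  have hρ := sq_add_sq_pos_of_exists_ne_zero hf hg hφ hψ hnt
  have hφc : ContinuousOn φ (Icc a b) := fun t ht => (hφ t ht).continuousAt.continuousWithinAt
  have hψc : ContinuousOn ψ (Icc a b) := fun t ht => (hψ t ht).continuousAt.continuousWithinAt
  have hρc : ContinuousOn (fun t => φ t ^ 2 + ψ t ^ 2) (Icc a b) := (hφc.pow 2).add (hψc.pow 2)
  obtain ⟨θ, hθt₀, hθ⟩ := ContinuousOn.exists_hasDerivAt_Icc (ht₀.1.trans ht₀.2)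
    (G := fun t => (f t * ψ t ^ 2 + g t * φ t ^ 2) / (φ t ^ 2 + ψ t ^ 2))
    (((hf.mul (hψc.pow 2)).add (hg.mul (hφc.pow 2))).div hρc fun t ht => (hρ t ht).ne') t₀ θ₀
  -- `D = 0` says that `(φ, ψ)` points in the direction `(sin θ, cos θ)`; `D` solves a linear ODE
  set D : ℝ → ℝ := fun t => φ t * cos (θ t) - ψ t * sin (θ t)
  set k : ℝ → ℝ := fun t => (f t - g t) * φ t * ψ t / (φ t ^ 2 + ψ t ^ 2)
  have hD : ∀ t ∈ Icc a b, HasDerivAt D (k t * D t) t := by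
    intro t ht
    refine (((hφ t ht).mul ((hθ t ht).cos)).sub ((hψ t ht).mul ((hθ t ht).sin))).congr_deriv ?_
    have := (hρ t ht).ne'
    simp only [D, k]
    field_simp
    ring
  obtain ⟨M, hM⟩ := isCompact_Icc.exists_bound_of_continuousOn (f := k)
    ((((hf.sub hg).mul hφc).mul hψc).div hρc fun t ht => (hρ t ht).ne')
  have hD0 : EqOn D 0 (Icc a b) :=
    eqOn_zero_of_abs_deriv_le_mul_abs hD
      (fun t ht => by rw [abs_mul]; exact mul_le_mul_of_nonneg_right (hM t ht) (abs_nonneg _))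
      ht₀ (by simp [D, hθt₀, hθ₀])
  refine ⟨θ, hθt₀, fun t ht => ?_⟩
  obtain ⟨r, hr, hφr, hψr⟩ := exists_polar_of_mul_cos_eq_mul_sin (hρ t ht)
    (sub_eq_zero.1 (hD0 ht))
  refine ⟨(hθ t ht).congr_deriv ?_, by simp [hφr, hr]⟩
  rw [hφr, hψr, div_eq_iff (by simpa [hφr, hψr] using (hρ t ht).ne')]
  linear_combination -(f t * cos (θ t) ^ 2 + g t * sin (θ t) ^ 2) * r ^ 2 * sin_sq_add_cos_sq (θ t)

theorem prufer_angle_le_of_majorant {s T : ℝ} {f₁ g₁ f₂ g₂ θ₁ θ₂ : ℝ → ℝ}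
    (hf₁ : ContinuousOn f₁ (Icc s T)) (hg₁ : ContinuousOn g₁ (Icc s T))
    (hf : ∀ t ∈ Icc s T, f₁ t ≤ f₂ t) (hg : ∀ t ∈ Icc s T, g₁ t ≤ g₂ t)
    (hθ₁ : ∀ t ∈ Icc s T, HasDerivAt θ₁ (f₁ t * cos (θ₁ t) ^ 2 + g₁ t * sin (θ₁ t) ^ 2) t)
    (hθ₂ : ∀ t ∈ Icc s T, HasDerivAt θ₂ (f₂ t * cos (θ₂ t) ^ 2 + g₂ t * sin (θ₂ t) ^ 2) t)
    (hs : θ₁ s ≤ θ₂ s) : ∀ t ∈ Icc s T, θ₁ t ≤ θ₂ t := by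
  obtain ⟨C, hC⟩ := isCompact_Icc.exists_bound_of_continuousOn (hg₁.sub hf₁)
  refine le_of_hasDerivAt_of_sub_le_mul (L := 2 * C) hθ₁ hθ₂ (fun u hu hlt => ?_) hs
  calc _ ≤ 2 * |g₁ u - f₁ u| * |θ₁ u - θ₂ u| :=
        mul_cos_sq_add_mul_sin_sq_sub_le (hf u hu) (hg u hu) _ _
    _ ≤ 2 * C * (θ₁ u - θ₂ u) := by
        have hCu : |g₁ u - f₁ u| ≤ C := hC u hu
        rw [abs_of_pos (sub_pos.2 hlt)]
        exact mul_le_mul_of_nonneg_right (by linarith) (sub_nonneg.2 hlt.le)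

def CrossesSinZerosUpward (θ : ℝ → ℝ) (s T : ℝ) : Prop :=
  ∀ c, sin c = 0 → ∀ u ∈ Icc s T, ∀ v ∈ Ioc u T, c ≤ θ u → c < θ v

theorem crossesSinZerosUpward_of_hasDerivAt {θ f g : ℝ → ℝ} {s T : ℝ}
    (hf : ∀ t ∈ Icc s T, 0 < f t)
    (hθ : ∀ t ∈ Icc s T, HasDerivAt θ (f t * cos (θ t) ^ 2 + g t * sin (θ t) ^ 2) t) :
    CrossesSinZerosUpward θ s T := by
  intro c hc u hu v hv hcu
  have hsub : Icc u T ⊆ Icc s T := Icc_subset_Icc_left hu.1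
  refine lt_of_hasDerivAt_pos_of_eq (fun t ht => hθ t (hsub ht)) (fun t ht hθt => ?_) hcu v hv
  rw [hθt, cos_sq', hc]
  simpa using hf t (hsub ht)

theorem CrossesSinZerosUpward.succ_mul_pi_le {θ : ℝ → ℝ} {s T : ℝ}
    (hθ : CrossesSinZerosUpward θ s T) (hs : 0 ≤ θ s) {n : ℕ} {z : Fin n → ℝ}
    (hz : StrictMono z) (hzI : ∀ i, z i ∈ Ioc s T) (hzero : ∀ i, sin (θ (z i)) = 0)
    (i : Fin n) : ((i : ℕ) + 1) * π ≤ θ (z i) := by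
  suffices ∀ m (hm : m < n), (m + 1) * π ≤ θ (z ⟨m, hm⟩) from this i i.2
  intro m
  induction m with
  | zero =>
    intro hm
    have hsT : s ≤ T := (hzI ⟨0, hm⟩).1.le.trans (hzI _).2
    have hlt : ((0 : ℕ) : ℝ) * π < θ (z ⟨0, hm⟩) := by
      simpa using hθ 0 sin_zero s (left_mem_Icc.2 hsT) _ (hzI _) hs
    simpa using succ_mul_pi_le_of_sin_eq_zero (hzero _) hlt
  | succ m ih =>
    intro hm
    have hlt : ((m + 1 : ℕ) : ℝ) * π < θ (z ⟨m + 1, hm⟩) := by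
      push_cast
      exact hθ _ (sin_succ_mul_pi m) _ (Ioc_subset_Icc_self (hzI _)) _
        ⟨hz (Fin.mk_lt_mk.2 m.lt_succ_self), (hzI _).2⟩ (ih (Nat.lt_of_succ_lt hm))
    exact_mod_cast succ_mul_pi_le_of_sin_eq_zero (hzero _) hlt

theorem CrossesSinZerosUpward.exists_strictMono_eq_succ_mul_pi {θ : ℝ → ℝ} {s T : ℝ}
    (hθ : CrossesSinZerosUpward θ s T) (hsT : s ≤ T) (hcont : ContinuousOn θ (Icc s T))
    (hs : θ s < π) {n : ℕ} (hT : n * π ≤ θ T) :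
    ∃ r : Fin n → ℝ, StrictMono r ∧ ∀ i, r i ∈ Ioc s T ∧ θ (r i) = ((i : ℕ) + 1) * π := by
  have hlevel : ∀ i : Fin n, ∃ r ∈ Ioc s T, θ r = ((i : ℕ) + 1) * π := by
    intro i
    have hπ : π ≤ ((i : ℕ) + 1) * π := le_mul_of_one_le_left pi_pos.le (by simp)
    have hn : ((i : ℕ) + 1) * π ≤ n * π := by
      gcongr
      exact_mod_cast i.2
    obtain ⟨r, hr, hθr⟩ := intermediate_value_Icc hsT hcont ⟨by linarith, hn.trans hT⟩
    exact ⟨r, ⟨hr.1.lt_of_ne (by rintro rfl; linarith), hr.2⟩, hθr⟩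
  choose r hrI hθr using hlevel
  refine ⟨r, fun i j hij => lt_of_not_ge fun hji => ?_, fun i => ⟨hrI i, hθr i⟩⟩
  have hle : ((j : ℕ) + 1) * π ≤ ((i : ℕ) + 1) * π := by
    rcases hji.lt_or_eq with hlt | heq
    · rw [← hθr i]
      exact (hθ _ (sin_succ_mul_pi j) _ (Ioc_subset_Icc_self (hrI j)) _ ⟨hlt, (hrI i).2⟩
        (hθr j).ge).le
    · rw [← hθr i, ← hθr j, heq]
  have hji' : ((j : ℕ) : ℝ) ≤ i := le_of_add_le_add_right (le_of_mul_le_mul_right hle pi_pos)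
  exact absurd hij (not_lt.2 (by exact_mod_cast hji'))

/-- Theorem 1.2 (first part): Sturm comparison for two linear systems.  If
`f₂ ≥ f₁ > 0`, `g₂ ≥ g₁`, the first component `φ₁` of a solution of system 1 has
exactly `n ≥ 1` zeros `t₁ < … < t_n` in `(t₀,tE]`, and
`ψ₁(t₀)/φ₁(t₀) ≥ ψ₂(t₀)/φ₂(t₀)` (with the `+∞` convention at vanishing denominators),
then `φ₂` has at least `n` zeros in `(t₀, t_n]`. -/
theorem sturm_comparison_systems
    (a b : ℝ) (f₁ g₁ f₂ g₂ : ℝ → ℝ)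
    (hf₁ : ContinuousOn f₁ (Icc a b)) (hg₁ : ContinuousOn g₁ (Icc a b))
    (hf₂ : ContinuousOn f₂ (Icc a b)) (hg₂ : ContinuousOn g₂ (Icc a b))
    (hmaj : ∀ t ∈ Icc a b, f₂ t ≥ f₁ t ∧ f₁ t > 0 ∧ g₂ t ≥ g₁ t)
    (t₀ tE : ℝ) (ht₀ : t₀ ∈ Icc a b) (htE : tE ∈ Icc a b)
    (φ₁ ψ₁ φ₂ ψ₂ : ℝ → ℝ)
    (hφ₁ : ∀ t ∈ Icc a b, HasDerivAt φ₁ (f₁ t * ψ₁ t) t)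
    (hψ₁ : ∀ t ∈ Icc a b, HasDerivAt ψ₁ (-(g₁ t * φ₁ t)) t)
    (hφ₂ : ∀ t ∈ Icc a b, HasDerivAt φ₂ (f₂ t * ψ₂ t) t)
    (hψ₂ : ∀ t ∈ Icc a b, HasDerivAt ψ₂ (-(g₂ t * φ₂ t)) t)
    (hnt₁ : ∃ t ∈ Icc a b, φ₁ t ≠ 0 ∨ ψ₁ t ≠ 0)
    (hnt₂ : ∃ t ∈ Icc a b, φ₂ t ≠ 0 ∨ ψ₂ t ≠ 0)
    (n : ℕ) (hn : 1 ≤ n) (zs : Fin n → ℝ) (hmono : StrictMono zs)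
    (hzs : ∀ i, zs i ∈ Ioc t₀ tE ∧ φ₁ (zs i) = 0)
    -- `ψ₁(t₀)/φ₁(t₀) ≥ ψ₂(t₀)/φ₂(t₀)`, the ratio read as `+∞` when the denominator is `0`
    (hratio : φ₁ t₀ = 0 ∨
      (φ₁ t₀ ≠ 0 ∧ φ₂ t₀ ≠ 0 ∧ ψ₁ t₀ / φ₁ t₀ ≥ ψ₂ t₀ / φ₂ t₀)) :
    ∃ s : Fin n → ℝ, StrictMono s ∧
      ∀ i, s i ∈ Ioc t₀ (zs ⟨n - 1, by omega⟩) ∧ φ₂ (s i) = 0 := by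
  set T := zs ⟨n - 1, by omega⟩
  have hzT : ∀ i, zs i ∈ Ioc t₀ T := fun i =>
    ⟨(hzs i).1.1, hmono.monotone (Fin.mk_le_mk.2 (Nat.le_sub_one_of_lt i.2))⟩
  have hsub : Icc t₀ T ⊆ Icc a b := Icc_subset_Icc ht₀.1 ((hzs _).1.2.trans htE.2)
  obtain ⟨θ₁, hθ₁t₀, hθ₁⟩ := exists_prufer_angle ht₀ hf₁ hg₁ hφ₁ hψ₁ hnt₁ (mul_cos_cotAngle _ _)
  obtain ⟨θ₂, hθ₂t₀, hθ₂⟩ := exists_prufer_angle ht₀ hf₂ hg₂ hφ₂ hψ₂ hnt₂ (mul_cos_cotAngle _ _)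
  have hcross₁ : CrossesSinZerosUpward θ₁ t₀ T := crossesSinZerosUpward_of_hasDerivAt
    (fun t ht => (hmaj t (hsub ht)).2.1) (fun t ht => (hθ₁ t (hsub ht)).1)
  have hcross₂ : CrossesSinZerosUpward θ₂ t₀ T := crossesSinZerosUpward_of_hasDerivAt
    (fun t ht => (hmaj t (hsub ht)).2.1.trans_le (hmaj t (hsub ht)).1)
    (fun t ht => (hθ₂ t (hsub ht)).1)
  have hθ₁T : n * π ≤ θ₁ T := by
    have := hcross₁.succ_mul_pi_le (hθ₁t₀ ▸ (cotAngle_mem_Ico _ _).1) hmono hzT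
      (fun i => (hθ₁ _ (hsub (Ioc_subset_Icc_self (hzT i)))).2.1 (hzs i).2) ⟨n - 1, by omega⟩
    rwa [Nat.cast_sub hn, Nat.cast_one, sub_add_cancel] at this
  have hθ₁₂ : θ₁ T ≤ θ₂ T :=
    prufer_angle_le_of_majorant (hf₁.mono hsub) (hg₁.mono hsub)
      (fun t ht => (hmaj t (hsub ht)).1) (fun t ht => (hmaj t (hsub ht)).2.2)
      (fun t ht => (hθ₁ t (hsub ht)).1)
      (fun t ht => (hθ₂ t (hsub ht)).1) (by rw [hθ₁t₀, hθ₂t₀]; exact cotAngle_le_cotAngle hratio)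
      T (right_mem_Icc.2 (hzT _).1.le)
  obtain ⟨s, hs, hsθ⟩ := hcross₂.exists_strictMono_eq_succ_mul_pi (hzT _).1.le
    (fun t ht => (hθ₂ t (hsub ht)).1.continuousAt.continuousWithinAt)
    (hθ₂t₀ ▸ (cotAngle_mem_Ico _ _).2) (hθ₁T.trans hθ₁₂)
  refine ⟨s, hs, fun i => ⟨(hsθ i).1, ?_⟩⟩
  rw [(hθ₂ _ (hsub (Ioc_subset_Icc_self (hsθ i).1))).2, (hsθ i).2]
  exact sin_succ_mul_pi i
end
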